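/- arXiv:2411.13171 — 10 statements merged into one kernel-verified Lean document; each statement's English description precedes it below -/
import Mathlib

section
/- Let c ∈ ℝ² and let S be a finite set of points in ℝ² such that dist(c,s) ≤ 2 for every s ∈ S and dist(s,s') > 2 for all distinct s,s' ∈ S. Then |S| ≤ 5. -/
/-!
Translate so that `c` is the origin. Two points of `S` at angle at most `π / 3` as seen from `c`
would be within distance `2` of each other by the law of cosines, so the directions of the
points of `S` are pairwise more than `π / 3` apart. Sorting their arguments, consecutive gaps
exceed `π / 3` while the total spread is less than `5 π / 3`, which leaves room for at most five.
-/

open Real InnerProductGeometry Finset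

theorem norm_sub_le_of_angle_le_pi_div_three {V : Type*} [NormedAddCommGroup V]
    [InnerProductSpace ℝ V] {x y : V} {r : ℝ} (hx : ‖x‖ ≤ r) (hy : ‖y‖ ≤ r)
    (h : angle x y ≤ π / 3) : ‖x - y‖ ≤ r := by
  have hcos : 1 / 2 ≤ cos (angle x y) := by
    rw [← cos_pi_div_three]
    exact cos_le_cos_of_nonneg_of_le_pi (angle_nonneg x y) (by linarith [pi_pos]) h
  have hr : 0 ≤ r := (norm_nonneg x).trans hx
  have hsq : ‖x - y‖ * ‖x - y‖ ≤ r * r := by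
    rw [norm_sub_sq_eq_norm_sq_add_norm_sq_sub_two_mul_norm_mul_norm_mul_cos_angle]
    -- `‖x‖² + ‖y‖² - ‖x‖‖y‖ ≤ max ‖x‖ ‖y‖ ^ 2`
    nlinarith [mul_nonneg (norm_nonneg x) (norm_nonneg y), norm_nonneg x, norm_nonneg y,
      mul_nonneg (sub_nonneg.2 hx) (sub_nonneg.2 hy)]
  exact (mul_self_le_mul_self_iff (norm_nonneg _) hr).2 hsq

theorem Finset.exists_card_sub_one_mul_le_sub {α : Type*} [Field α] [LinearOrder α]
    [IsStrictOrderedRing α] {A : Finset α} (hA : A.Nonempty) {δ : α}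
    (h : ∀ x ∈ A, ∀ y ∈ A, x < y → δ ≤ y - x) :
    ∃ x ∈ A, ∃ y ∈ A, (#A - 1 : α) * δ ≤ y - x := by
  induction A using Finset.induction_on_max with
  | empty => exact absurd hA not_nonempty_empty
  | insert m B hmax ih =>
    have hm : m ∉ B := fun hm => (hmax m hm).false
    rw [card_insert_of_notMem hm]
    rcases B.eq_empty_or_nonempty with rfl | hB
    · exact ⟨m, mem_insert_self m ∅, m, mem_insert_self m ∅, by simp⟩
    obtain ⟨x, hx, y, hy, hxy⟩ :=
      ih hB fun a ha b hb => h a (mem_insert_of_mem ha) b (mem_insert_of_mem hb)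
    have hym : δ ≤ m - y := h y (mem_insert_of_mem hy) m (mem_insert_self m B) (hmax y hy)
    refine ⟨x, mem_insert_of_mem hx, m, mem_insert_self m B, ?_⟩
    push_cast
    linarith

theorem Finset.card_sub_one_mul_lt {α : Type*} [Field α] [LinearOrder α]
    [IsStrictOrderedRing α] {A : Finset α} (hA : A.Nonempty) {δ L : α} (hL : 0 < L)
    (hδ : ∀ x ∈ A, ∀ y ∈ A, x < y → δ ≤ y - x)
    (hlt : ∀ x ∈ A, ∀ y ∈ A, x < y → y - x < L) :
    (#A - 1 : α) * δ < L := by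
  obtain ⟨x, hx, y, hy, hxy⟩ := exists_card_sub_one_mul_le_sub hA hδ
  rcases lt_or_ge x y with h | h
  · exact hxy.trans_lt (hlt x hx y hy h)
  · linarith

theorem Complex.cos_angle_eq_cos_arg_sub {x y : ℂ} (hx : x ≠ 0) (hy : y ≠ 0) :
    Real.cos (angle x y) = Real.cos (x.arg - y.arg) := by
  rw [Complex.angle_eq_abs_arg hx hy, Real.cos_abs, ← Real.Angle.cos_coe, ← Real.Angle.cos_coe,
    Complex.arg_div_coe_angle hx hy, Real.Angle.coe_sub]

theorem Real.mem_Ioo_of_cos_lt_half {d : ℝ} (h0 : 0 ≤ d) (h2 : d ≤ 2 * π)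
    (h : cos d < 1 / 2) : d ∈ Set.Ioo (π / 3) (5 * π / 3) := by
  rw [← cos_pi_div_three] at h
  constructor
  · by_contra! hd
    exact h.not_ge (cos_le_cos_of_nonneg_of_le_pi h0 (by linarith [pi_pos]) hd)
  · by_contra! hd
    rw [← cos_two_pi_sub] at h
    exact h.not_ge (cos_le_cos_of_nonneg_of_le_pi (by linarith) (by linarith [pi_pos])
      (by linarith))

theorem Complex.card_le_five_of_pi_div_three_lt_angle {A : Finset ℂ} (h0 : ∀ z ∈ A, z ≠ 0)
    (hA : ∀ z ∈ A, ∀ w ∈ A, z ≠ w → π / 3 < angle z w) : #A ≤ 5 := by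
  have hsep : ∀ z ∈ A, ∀ w ∈ A, z ≠ w → arg z ≤ arg w →
      arg w - arg z ∈ Set.Ioo (π / 3) (5 * π / 3) := by
    intro z hz w hw hzw hle
    refine mem_Ioo_of_cos_lt_half (by linarith) (by linarith [neg_pi_lt_arg z, arg_le_pi w]) ?_
    rw [← cos_angle_eq_cos_arg_sub (h0 w hw) (h0 z hz), ← cos_pi_div_three]
    exact cos_lt_cos_of_nonneg_of_le_pi (by positivity) (angle_le_pi w z) (hA w hw z hz hzw.symm)
  have hinj : Set.InjOn arg A := fun z hz w hw hzw => by
    by_contra hne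
    have := (hsep z hz w hw hne hzw.le).1
    rw [hzw, sub_self] at this
    linarith [pi_pos]
  rcases A.eq_empty_or_nonempty with rfl | hne
  · simp
  have hgap : ∀ θ ∈ A.image arg, ∀ θ' ∈ A.image arg, θ < θ' →
      θ' - θ ∈ Set.Ioo (π / 3) (5 * π / 3) := by
    simp only [forall_mem_image]
    exact fun z hz w hw hlt => hsep z hz w hw (by rintro rfl; exact hlt.false) hlt.le
  have key := card_sub_one_mul_lt (hne.image arg) (by positivity : 0 < 5 * π / 3)
    (fun θ hθ θ' hθ' h => (hgap θ hθ θ' hθ' h).1.le)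
    (fun θ hθ θ' hθ' h => (hgap θ hθ θ' hθ' h).2)
  rw [card_image_of_injOn hinj] at key
  have : (#A : ℝ) < 6 := by nlinarith [pi_pos]
  exact Nat.lt_succ_iff.1 (by exact_mod_cast this)

/-- At most 5 pairwise non-intersecting closed unit disks can all intersect a fixed
closed unit disk (centers of the `S`-disks are within distance 2 of `c`, and pairwise
at distance greater than 2). -/
theorem stmt_1 (c : EuclideanSpace ℝ (Fin 2)) (S : Finset (EuclideanSpace ℝ (Fin 2)))
    (h1 : ∀ s ∈ S, dist c s ≤ 2)
    (h2 : ∀ s ∈ S, ∀ s' ∈ S, s ≠ s' → 2 < dist s s') :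
    S.card ≤ 5 := by
  by_cases hc : c ∈ S
  · have hS : S ⊆ {c} := fun s hs => mem_singleton.2 <| by
      by_contra hsc
      linarith [h1 s hs, h2 c hc s hs (Ne.symm hsc)]
    exact (card_le_card hS).trans (by simp)
  set φ := Complex.orthonormalBasisOneI.repr.symm
  have hinj : Set.InjOn (fun s => φ (s - c)) S := fun s _ t _ hst => by simpa using hst
  rw [← card_image_of_injOn hinj]
  refine Complex.card_le_five_of_pi_div_three_lt_angle ?_ ?_ <;> simp only [forall_mem_image]
  · intro s hs
    simpa [sub_eq_zero] using ne_of_mem_of_not_mem hs hc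
  · intro s hs t ht hst
    rw [show angle (φ (s - c)) (φ (t - c)) = angle (s - c) (t - c) from
      φ.toLinearIsometry.angle_map _ _]
    by_contra! hle
    have := norm_sub_le_of_angle_le_pi_div_three (r := 2)
      (by rw [← dist_eq_norm, dist_comm]; exact h1 s hs)
      (by rw [← dist_eq_norm, dist_comm]; exact h1 t ht) hle
    rw [sub_sub_sub_cancel_right, ← dist_eq_norm] at this
    exact (h2 s hs t ht fun h => hst (by rw [h])).not_ge this
end

section
/- Let P be a finite set of points in ℝ², let 0 < α ≤ 1, and suppose some v ∈ P satisfies |{q ∈ P : q ≠ v and dist(v,q) < 2}| > (2/α + 1)² − 1. Then for every function r : P → ℝ with α ≤ r(p) ≤ 1 for all p ∈ P, the open-disk intersection graph G(P,r) has at least one edge. In particular, (P,α,k) is a no-instance of k-Shrinking to Independence for every k. -/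
/-! If `G(P, r)` were edgeless with all radii at least `α`, the closed unit-disk neighbourhood
of `v` would be a `2α`-separated set inside the open disk of radius `2` around `v`. The disjoint
disks of radius `α` around its points fit in the disk of radius `2 + α`, so comparing areas
bounds its size by `((2 + α) / α) ^ 2 = (2 / α + 1) ^ 2`. -/

open scoped Classical

abbrev Pt := EuclideanSpace ℝ (Fin 2)

/-- The open-disk intersection graph of the points of `P` with radius assignment `r`:
distinct points `p, q ∈ P` are adjacent iff `dist p q < r p + r q`. -/
def diskGraph (P : Finset Pt) (r : Pt → ℝ) : SimpleGraph {x : Pt // x ∈ P} where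
  Adj p q := p ≠ q ∧ dist (p : Pt) (q : Pt) < r p + r q
  symm := ⟨fun p q h => ⟨h.1.symm, by rw [dist_comm, add_comm]; exact h.2⟩⟩
  loopless := ⟨fun p h => h.1 rfl⟩

open MeasureTheory Metric Module

theorem card_mul_pow_le_of_pairwise_le_dist {E : Type*} [NormedAddCommGroup E]
    [NormedSpace ℝ E] [MeasurableSpace E] [BorelSpace E] [FiniteDimensional ℝ E]
    {s : Finset E} {v : E} {ε R : ℝ} (hε : 0 < ε) (hR : 0 ≤ R)
    (hin : ∀ p ∈ s, dist p v < R)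
    (hsep : (s : Set E).Pairwise fun p q => 2 * ε ≤ dist p q) :
    (s.card : ℝ) * ε ^ finrank ℝ E ≤ (R + ε) ^ finrank ℝ E := by
  have hdisj : (s : Set E).PairwiseDisjoint (ball · ε) := fun p hp q hq hpq =>
    ball_disjoint_ball (by linarith [hsep hp hq hpq])
  have hsub : (⋃ p ∈ s, ball p ε) ⊆ ball v (R + ε) := by
    simp only [Set.iUnion_subset_iff]
    intro p hp x hx
    rw [mem_ball] at hx ⊢
    linarith [dist_triangle x p v, hin p hp]
  let μ : Measure E := Measure.addHaar
  have hvol : ∑ p ∈ s, μ (ball p ε) ≤ μ (ball v (R + ε)) := by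
    rw [← measure_biUnion_finset hdisj fun p _ => measurableSet_ball]
    exact measure_mono hsub
  simp only [Measure.addHaar_ball_of_pos μ _ hε,
    Measure.addHaar_ball_of_pos μ _ (by linarith : 0 < R + ε),
    Finset.sum_const, nsmul_eq_mul, ← mul_assoc] at hvol
  rw [ENNReal.mul_le_mul_iff_left (measure_ball_pos μ 0 one_pos).ne' measure_ball_lt_top.ne,
    ← ENNReal.ofReal_natCast, ← ENNReal.ofReal_mul (by positivity)] at hvol
  exact (ENNReal.ofReal_le_ofReal_iff (by positivity)).mp hvol

theorem two_mul_le_dist_of_not_diskGraph_adj {P : Finset Pt} {r : Pt → ℝ} {α : ℝ}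
    (hr : ∀ p ∈ P, α ≤ r p) {p q : Pt} (hp : p ∈ P) (hq : q ∈ P) (hpq : p ≠ q)
    (h : ¬ (diskGraph P r).Adj ⟨p, hp⟩ ⟨q, hq⟩) : 2 * α ≤ dist p q := by
  have : r p + r q ≤ dist p q := not_lt.mp fun hlt => h ⟨by simpa using hpq, hlt⟩
  linarith [hr p hp, hr q hq]

theorem exists_diskGraph_adj_of_lt_ncard {P : Finset Pt} {r : Pt → ℝ} {α : ℝ} (hα : 0 < α)
    (hr : ∀ p ∈ P, α ≤ r p) {v : Pt} (hv : v ∈ P)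
    (hdeg : (2 / α + 1) ^ 2 - 1 < ({q : Pt | q ∈ P ∧ q ≠ v ∧ dist v q < 2}.ncard : ℝ)) :
    ∃ p q, (diskGraph P r).Adj p q := by
  by_contra! hno
  set s := P.filter (dist v · < 2)
  have hvs : v ∈ s := by simp [s, hv]
  have hneighbors : {q : Pt | q ∈ P ∧ q ≠ v ∧ dist v q < 2} = ↑(s.erase v) := by
    ext q
    simp only [s, Set.mem_ofPred_eq, Finset.coe_erase, Set.mem_sdiff, Finset.mem_coe,
      Finset.mem_filter, Set.mem_singleton_iff]
    tauto
  have hsep : (s : Set Pt).Pairwise fun p q => 2 * α ≤ dist p q := fun p hp q hq hpq =>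
    two_mul_le_dist_of_not_diskGraph_adj hr (Finset.mem_filter.mp hp).1
      (Finset.mem_filter.mp hq).1 hpq (hno _ _)
  have hpack : (s.card : ℝ) * α ^ 2 ≤ (2 + α) ^ 2 := by
    simpa using card_mul_pow_le_of_pairwise_le_dist hα zero_le_two
      (fun p hp => by rw [dist_comm]; exact (Finset.mem_filter.mp hp).2) hsep
  have hcard : (s.card : ℝ) ≤ (2 / α + 1) ^ 2 := by
    rw [← mul_le_mul_iff_of_pos_right (pow_pos hα 2), ← mul_pow, add_mul,
      div_mul_cancel₀ _ hα.ne', one_mul]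
    exact hpack
  rw [hneighbors, Set.ncard_coe_finset, Finset.cast_card_erase_of_mem hvs] at hdeg
  linarith

/-- If some vertex of the unit disk graph has degree larger than (2/α+1)² - 1,
then no radius assignment with values in [α,1] makes the open-disk graph edgeless;
in particular, (P,α,k) is a no-instance of k-Shrinking to Independence for every k. -/
theorem stmt_2 (P : Finset Pt) (α : ℝ) (hα₀ : 0 < α) (hα₁ : α ≤ 1)
    (v : Pt) (hv : v ∈ P)
    (hdeg : ((2 / α + 1) ^ 2 - 1 : ℝ) <
      ({q : Pt | q ∈ P ∧ q ≠ v ∧ dist v q < 2}.ncard : ℝ)) :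
    (∀ r : Pt → ℝ, (∀ p ∈ P, α ≤ r p ∧ r p ≤ 1) →
      ∃ p q, (diskGraph P r).Adj p q) ∧
    (∀ k : ℕ, ¬ ∃ S ⊆ P, S.card ≤ k ∧
      ∀ p q, ¬ (diskGraph P (fun x => if x ∈ S then α else 1)).Adj p q) := by
  refine ⟨fun r hr => exists_diskGraph_adj_of_lt_ncard hα₀ (fun p hp => (hr p hp).1) hv hdeg,
    fun k ⟨S, _, _, hS⟩ => ?_⟩
  have hshrunk : ∀ p ∈ P, α ≤ if p ∈ S then α else 1 := fun p _ => by
    split_ifs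
    exacts [le_rfl, hα₁]
  obtain ⟨p, q, hpq⟩ := exists_diskGraph_adj_of_lt_ncard hα₀ hshrunk hv hdeg
  exact hS p q hpq
end

section
/- Let P be a finite set of points in ℝ², let 0 < α ≤ 1, and suppose some v ∈ P satisfies |{q ∈ P : q ≠ v and dist(v,q) < 2}| > 6(2/α + 1)² − 1. Then for every function r : P → ℝ with α ≤ r(p) ≤ 1 for all p ∈ P, the open-disk intersection graph G(P,r) contains a cycle (it is not acyclic). In particular, (P,α,k) is a no-instance of k-Shrinking to Acyclicity for every k. -/
open scoped Classical

/-!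
The neighbours of `v` within distance `2` lie in the square of half-side `2` around `v`. Cut
the plane into square cells of side `4α/3`: two points of one cell are closer than `2α`, and
at most `(3/α + 2)²` cells meet the square. Since `v` has more than `6(2/α + 1)² - 1 ≥ 2(3/α + 2)²`
such neighbours, some cell holds three of them, and since every radius is at least `α` they
form a triangle in `G(P, r)`.
-/

open Finset

section GridCells

noncomputable def gridCell (s : ℝ) (p : Pt) : ℤ × ℤ := (⌊p 0 / s⌋, ⌊p 1 / s⌋)

/-- The grid cells of mesh `s` meeting the square of half-side `ρ` centred at `v`. -/
noncomputable def cellsNear (s : ℝ) (v : Pt) (ρ : ℝ) : Finset (ℤ × ℤ) :=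
  Icc ⌊(v 0 - ρ) / s⌋ ⌊(v 0 + ρ) / s⌋ ×ˢ Icc ⌊(v 1 - ρ) / s⌋ ⌊(v 1 + ρ) / s⌋

variable {s : ℝ}

lemma abs_sub_lt_of_floor_div_eq (hs : 0 < s) {x y : ℝ} (h : ⌊x / s⌋ = ⌊y / s⌋) :
    |x - y| < s := by
  have := Int.abs_sub_lt_one_of_floor_eq_floor h
  rwa [← sub_div, abs_div, abs_of_pos hs, div_lt_one hs] at this

lemma dist_sq_lt_of_gridCell_eq (hs : 0 < s) {p q : Pt} (h : gridCell s p = gridCell s q) :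
    dist p q ^ 2 < 2 * s ^ 2 := by
  have h0 := abs_sub_lt_of_floor_div_eq hs (congrArg Prod.fst h)
  have h1 := abs_sub_lt_of_floor_div_eq hs (congrArg Prod.snd h)
  rw [EuclideanSpace.dist_eq, Real.sq_sqrt (by positivity), Fin.sum_univ_two,
    Real.dist_eq, Real.dist_eq]
  nlinarith [abs_nonneg (p 0 - q 0), abs_nonneg (p 1 - q 1)]

lemma floor_div_mem_Icc (hs : 0 < s) {x c ρ : ℝ} (h : |x - c| ≤ ρ) :
    ⌊x / s⌋ ∈ Icc ⌊(c - ρ) / s⌋ ⌊(c + ρ) / s⌋ := by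
  rw [abs_le] at h
  exact mem_Icc.mpr ⟨Int.floor_mono (by gcongr; linarith), Int.floor_mono (by gcongr; linarith)⟩

lemma gridCell_mem_cellsNear (hs : 0 < s) {v q : Pt} {ρ : ℝ} (h : dist q v ≤ ρ) :
    gridCell s q ∈ cellsNear s v ρ :=
  mem_product.mpr
    ⟨floor_div_mem_Icc hs ((PiLp.dist_apply_le q v 0).trans h),
      floor_div_mem_Icc hs ((PiLp.dist_apply_le q v 1).trans h)⟩

lemma card_Icc_floor_div_le (hs : 0 < s) {a b : ℝ} (hab : a ≤ b) :
    (#(Icc ⌊a / s⌋ ⌊b / s⌋) : ℝ) ≤ (b - a) / s + 2 := by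
  have hle : ⌊a / s⌋ ≤ ⌊b / s⌋ + 1 := by
    have : ⌊a / s⌋ ≤ ⌊b / s⌋ := Int.floor_mono (by gcongr)
    omega
  have hcard : (#(Icc ⌊a / s⌋ ⌊b / s⌋) : ℝ) = ⌊b / s⌋ + 1 - ⌊a / s⌋ := by
    exact_mod_cast Int.card_Icc_of_le _ _ hle
  rw [hcard, sub_div]
  linarith [Int.floor_le (b / s), Int.lt_floor_add_one (a / s)]

lemma card_cellsNear_le (hs : 0 < s) (v : Pt) {ρ : ℝ} (hρ : 0 ≤ ρ) :
    (#(cellsNear s v ρ) : ℝ) ≤ (2 * ρ / s + 2) ^ 2 := by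
  have key : ∀ c : ℝ, (#(Icc ⌊(c - ρ) / s⌋ ⌊(c + ρ) / s⌋) : ℝ) ≤ 2 * ρ / s + 2 := fun c => by
    simpa [two_mul, add_sub_sub_cancel] using
      card_Icc_floor_div_le hs (by linarith : c - ρ ≤ c + ρ)
  rw [cellsNear, card_product, Nat.cast_mul, sq]
  exact mul_le_mul (key _) (key _) (Nat.cast_nonneg _) (by positivity)

end GridCells

lemma exists_pairwise_close_of_card_lt {S : Finset Pt} {v : Pt} {ρ α : ℝ} (hα : 0 < α)
    (hρ : 0 ≤ ρ) (hS : ∀ q ∈ S, dist q v ≤ ρ) (hcard : 2 * (3 * ρ / (2 * α) + 2) ^ 2 < #S) :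
    ∃ T ⊆ S, 2 < #T ∧ ∀ p ∈ T, ∀ q ∈ T, dist p q < 2 * α := by
  set s := 4 * α / 3
  have hs : 0 < s := by positivity
  have hmaps : ∀ q ∈ S, gridCell s q ∈ cellsNear s v ρ := fun q hq =>
    gridCell_mem_cellsNear hs (hS q hq)
  have hlt : #(cellsNear s v ρ) * 2 < #S := by
    have hcells := card_cellsNear_le hs v hρ
    have hmesh : 2 * ρ / s = 3 * ρ / (2 * α) := by field_simp; ring
    rw [hmesh] at hcells
    exact_mod_cast (show (#(cellsNear s v ρ) * 2 : ℝ) < #S by linarith)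
  obtain ⟨c, -, hc⟩ := exists_lt_card_fiber_of_mul_lt_card_of_maps_to hmaps hlt
  refine ⟨_, filter_subset _ _, hc, fun p hp q hq => ?_⟩
  have h := dist_sq_lt_of_gridCell_eq hs ((mem_filter.mp hp).2.trans (mem_filter.mp hq).2.symm)
  have hmesh : 2 * s ^ 2 < (2 * α) ^ 2 := by simp only [s]; nlinarith
  nlinarith [dist_nonneg (x := p) (y := q)]

lemma diskGraph_not_isAcyclic_of_pairwise_close {P T : Finset Pt} {r : Pt → ℝ} {α : ℝ}
    (hr : ∀ p ∈ P, α ≤ r p) (hTP : T ⊆ P) (hT : 2 < #T)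
    (hclose : ∀ p ∈ T, ∀ q ∈ T, dist p q < 2 * α) : ¬ (diskGraph P r).IsAcyclic := by
  obtain ⟨a, ha, b, hb, c, hc, hab, hac, hbc⟩ := two_lt_card.mp hT
  have adj {p q : Pt} (hp : p ∈ T) (hq : q ∈ T) (hpq : p ≠ q) :
      (diskGraph P r).Adj ⟨p, hTP hp⟩ ⟨q, hTP hq⟩ :=
    ⟨fun h => hpq (congrArg Subtype.val h),
      by linarith [hclose p hp q hq, hr p (hTP hp), hr q (hTP hq)]⟩
  intro hacyc
  exact hacyc.cliqueFree le_rfl _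
    (SimpleGraph.is3Clique_triple_iff.mpr ⟨adj ha hb hab, adj ha hc hac, adj hb hc hbc⟩)

theorem stmt_3_general (P : Finset Pt) (α : ℝ) (hα₀ : 0 < α) (hα₁ : α ≤ 1)
    (v : Pt)
    (hdeg : (6 * (2 / α + 1) ^ 2 - 1 : ℝ) <
      ({q : Pt | q ∈ P ∧ q ≠ v ∧ dist v q < 2}.ncard : ℝ)) :
    (∀ r : Pt → ℝ, (∀ p ∈ P, α ≤ r p ∧ r p ≤ 1) →
      ¬ (diskGraph P r).IsAcyclic) ∧
    (∀ k : ℕ, ¬ ∃ S ⊆ P, S.card ≤ k ∧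
      (diskGraph P (fun x => if x ∈ S then α else 1)).IsAcyclic) := by
  have key (r : Pt → ℝ) (hr : ∀ p ∈ P, α ≤ r p ∧ r p ≤ 1) : ¬ (diskGraph P r).IsAcyclic := by
    set N := {q ∈ P | q ≠ v ∧ dist v q < 2}
    have hN : {q : Pt | q ∈ P ∧ q ≠ v ∧ dist v q < 2}.ncard = #N := by
      rw [← Set.ncard_coe_finset]
      congr 1
      ext
      simp [N]
    have hbound : 2 * (3 * 2 / (2 * α) + 2) ^ 2 ≤ 6 * (2 / α + 1) ^ 2 - 1 := by
      have hu : 1 ≤ 1 / α := by rwa [le_div_iff₀ hα₀, one_mul]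
      have : 3 * 2 / (2 * α) = 3 * (1 / α) := by field_simp
      rw [this, div_eq_mul_one_div 2 α]
      nlinarith
    obtain ⟨T, hTS, hT, hclose⟩ := exists_pairwise_close_of_card_lt (S := N) hα₀ zero_le_two
      (fun q hq => (dist_comm q v).trans_le (mem_filter.mp hq).2.2.le)
      (by rw [hN] at hdeg; linarith)
    exact diskGraph_not_isAcyclic_of_pairwise_close (fun p hp => (hr p hp).1)
      (hTS.trans (filter_subset _ _)) hT hclose
  refine ⟨key, ?_⟩
  rintro k ⟨S, -, -, hacyc⟩
  exact key _ (fun p _ => by split_ifs <;> constructor <;> linarith) hacyc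

/-- If some vertex of the unit disk graph has degree larger than 6(2/α+1)² - 1,
then no radius assignment with values in [α,1] makes the open-disk graph acyclic;
in particular, (P,α,k) is a no-instance of k-Shrinking to Acyclicity for every k. -/
theorem stmt_3 (P : Finset Pt) (α : ℝ) (hα₀ : 0 < α) (hα₁ : α ≤ 1)
    (v : Pt) (hv : v ∈ P)
    (hdeg : (6 * (2 / α + 1) ^ 2 - 1 : ℝ) <
      ({q : Pt | q ∈ P ∧ q ≠ v ∧ dist v q < 2}.ncard : ℝ)) :
    (∀ r : Pt → ℝ, (∀ p ∈ P, α ≤ r p ∧ r p ≤ 1) →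
      ¬ (diskGraph P r).IsAcyclic) ∧
    (∀ k : ℕ, ¬ ∃ S ⊆ P, S.card ≤ k ∧
      (diskGraph P (fun x => if x ∈ S then α else 1)).IsAcyclic) :=
  stmt_3_general P α hα₀ hα₁ v hdeg
end

section
/- Let P be a finite set of points in ℝ², let 0 < α ≤ 1, and let K ⊆ P with dist(p,q) < 2 for all distinct p,q ∈ K (so K is a clique of the unit disk graph G(P,𝟏)). If |K| > (2/α + 1)², then for every r : P → ℝ with α ≤ r(p) ≤ 1 for all p, the open-disk intersection graph G(P,r) has at least one edge; and if |K| > 6(2/α + 1)², then for every such r, G(P,r) contains a cycle. -/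
open scoped Classical

/-!
The disks `B(p, α)`, `p ∈ K`, lie in a disk of radius `2 + α`. If no `m + 1` points of `K` are
pairwise closer than `2α`, no point of the plane lies in `m + 1` of these disks, and comparing
areas gives `|K| ≤ m (2/α + 1)²`. So a larger `K` contains `m + 1` points pairwise closer than
`2α ≤ r p + r q`: an edge of `G(P, r)` for `m = 1`, a triangle for `m = 2`.
-/

open Finset Metric MeasureTheory Module

section Packing

variable {E : Type*} [NormedAddCommGroup E] [NormedSpace ℝ E] [FiniteDimensional ℝ E]

theorem card_mul_pow_finrank_le_of_ball_multiplicity_le {S : Finset E} {x₀ : E} {ρ R : ℝ}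
    {m : ℕ} (hρ : 0 < ρ) (hR : 0 ≤ R) (hS : ∀ p ∈ S, dist p x₀ ≤ R)
    (hm : ∀ x, #{p ∈ S | dist p x < ρ} ≤ m) :
    (#S : ℝ) * ρ ^ finrank ℝ E ≤ m * (R + ρ) ^ finrank ℝ E := by
  borelize E
  set μ : Measure E := Measure.addHaar
  have hpointwise : ∀ x, ∑ p ∈ S, (ball p ρ).indicator 1 x ≤
      (ball x₀ (R + ρ)).indicator (fun _ => (m : ENNReal)) x := by
    intro x
    by_cases hx : x ∈ ball x₀ (R + ρ)
    · simp only [Set.indicator_apply, hx, if_true, mem_ball, Pi.one_apply, Finset.sum_boole]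
      simp_rw [dist_comm x]
      exact_mod_cast hm x
    · refine (Finset.sum_eq_zero fun p hp => Set.indicator_of_notMem (fun hxp => hx ?_) _).trans_le
        zero_le
      rw [mem_ball] at hxp ⊢
      linarith [dist_triangle x p x₀, hS p hp]
  have hvol : (#S : ENNReal) * μ (ball 0 ρ) ≤ m * μ (ball x₀ (R + ρ)) :=
    calc (#S : ENNReal) * μ (ball 0 ρ) = ∑ p ∈ S, μ (ball p ρ) := by
          simp [Measure.addHaar_ball_center]
      _ = ∫⁻ x, ∑ p ∈ S, (ball p ρ).indicator 1 x ∂μ := by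
          rw [lintegral_finsetSum _ fun p _ => measurable_one.indicator measurableSet_ball]
          simp_rw [lintegral_indicator_one measurableSet_ball]
      _ ≤ ∫⁻ x, (ball x₀ (R + ρ)).indicator (fun _ => (m : ENNReal)) x ∂μ :=
          lintegral_mono hpointwise
      _ = m * μ (ball x₀ (R + ρ)) := by
          rw [lintegral_indicator_const measurableSet_ball]
  rw [Measure.addHaar_ball_of_pos μ 0 hρ,
    Measure.addHaar_ball_of_pos μ x₀ (by linarith : 0 < R + ρ), ← mul_assoc, ← mul_assoc,
    ENNReal.mul_le_mul_iff_left (measure_ball_pos μ 0 one_pos).ne' measure_ball_lt_top.ne,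
    ← ENNReal.ofReal_natCast, ← ENNReal.ofReal_natCast m,
    ← ENNReal.ofReal_mul (by positivity), ← ENNReal.ofReal_mul (by positivity)] at hvol
  exact (ENNReal.ofReal_le_ofReal_iff (by positivity)).mp hvol

theorem exists_card_gt_of_pairwise_dist_lt {K : Finset E} {ρ R : ℝ} {m : ℕ} (hρ : 0 < ρ)
    (hR : 0 ≤ R) (hK : ∀ p ∈ K, ∀ q ∈ K, p ≠ q → dist p q < R)
    (hcard : m * (R / ρ + 1) ^ finrank ℝ E < #K) :
    ∃ T ⊆ K, m < #T ∧ ∀ p ∈ T, ∀ q ∈ T, dist p q < 2 * ρ := by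
  obtain ⟨x₀, hx₀⟩ : K.Nonempty := by
    rw [← Finset.card_pos, ← Nat.cast_pos (α := ℝ)]
    exact lt_of_le_of_lt (by positivity) hcard
  have hball : ∀ p ∈ K, dist p x₀ ≤ R := fun p hp => by
    rcases eq_or_ne p x₀ with rfl | hne
    · simpa using hR
    · exact (hK p hp x₀ hx₀ hne).le
  by_contra! hsparse
  have hm : ∀ x, #{p ∈ K | dist p x < ρ} ≤ m := fun x => by
    by_contra! hx
    obtain ⟨p, hp, q, hq, hpq⟩ := hsparse _ (filter_subset _ _) hx
    rw [mem_filter] at hp hq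
    linarith [dist_triangle_right p q x]
  have hpack := card_mul_pow_finrank_le_of_ball_multiplicity_le hρ hR hball hm
  have hscale : (R / ρ + 1) ^ finrank ℝ E * ρ ^ finrank ℝ E = (R + ρ) ^ finrank ℝ E := by
    rw [← mul_pow, add_mul, div_mul_cancel₀ _ hρ.ne', one_mul]
  have := mul_lt_mul_of_pos_right hcard (pow_pos hρ (finrank ℝ E))
  rw [mul_assoc, hscale] at this
  linarith

end Packing

theorem SimpleGraph.not_isAcyclic_of_isClique {V : Type*} {G : SimpleGraph V} {s : Finset V}
    (hs : G.IsClique (s : Set V)) (hcard : 3 ≤ #s) : ¬ G.IsAcyclic := fun hG =>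
  (hG.cliqueFree hcard) s ⟨hs, rfl⟩

theorem diskGraph_isClique {P : Finset Pt} {r : Pt → ℝ} {α : ℝ}
    (hr : ∀ p ∈ P, α ≤ r p) {T : Finset Pt}
    (hT : ∀ p ∈ T, ∀ q ∈ T, dist p q < 2 * α) :
    (diskGraph P r).IsClique {x | (x : Pt) ∈ T} := fun p hp q hq hpq =>
  ⟨hpq, by linarith [hT p hp q hq, hr p p.2, hr q q.2]⟩

theorem stmt_4_general (P : Finset Pt) (α : ℝ) (hα₀ : 0 < α)
    (K : Finset Pt) (hKP : K ⊆ P)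
    (hclique : ∀ p ∈ K, ∀ q ∈ K, p ≠ q → dist p q < 2) :
    (((2 / α + 1) ^ 2 : ℝ) < K.card →
      ∀ r : Pt → ℝ, (∀ p ∈ P, α ≤ r p ∧ r p ≤ 1) →
        ∃ p q, (diskGraph P r).Adj p q) ∧
    ((6 * (2 / α + 1) ^ 2 : ℝ) < K.card →
      ∀ r : Pt → ℝ, (∀ p ∈ P, α ≤ r p ∧ r p ≤ 1) →
        ¬ (diskGraph P r).IsAcyclic) := by
  have hclose (m : ℕ) (hcard : m * (2 / α + 1) ^ 2 < (#K : ℝ)) :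
      ∃ T ⊆ K, m < #T ∧ ∀ p ∈ T, ∀ q ∈ T, dist p q < 2 * α := by
    refine exists_card_gt_of_pairwise_dist_lt hα₀ zero_le_two hclique ?_
    rwa [finrank_euclideanSpace_fin]
  refine ⟨fun hcard r hr => ?_, fun hcard r hr => ?_⟩
  · obtain ⟨T, hTK, hT, hTclose⟩ := hclose 1 (by simpa using hcard)
    obtain ⟨a, ha, b, hb, hab⟩ := Finset.one_lt_card.mp hT
    exact ⟨⟨a, hKP (hTK ha)⟩, ⟨b, hKP (hTK hb)⟩,
      diskGraph_isClique (fun p hp => (hr p hp).1) hTclose ha hb (by simpa using hab)⟩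
  · obtain ⟨T, hTK, hT, hTclose⟩ := hclose 2 (by nlinarith [sq_nonneg (2 / α + 1)])
    refine SimpleGraph.not_isAcyclic_of_isClique (s := T.subtype (· ∈ P)) ?_ ?_
    · exact fun p hp q hq => diskGraph_isClique (fun p hp => (hr p hp).1) hTclose
        (mem_subtype.mp hp) (mem_subtype.mp hq)
    · rw [card_subtype, filter_true_of_mem fun p hp => hKP (hTK hp)]
      exact hT

/-- A clique of the unit disk graph of size larger than (2/α+1)² forces an edge in any
[α,1]-shrinking, and one of size larger than 6(2/α+1)² forces a cycle. -/
theorem stmt_4 (P : Finset Pt) (α : ℝ) (hα₀ : 0 < α) (hα₁ : α ≤ 1)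
    (K : Finset Pt) (hKP : K ⊆ P)
    (hclique : ∀ p ∈ K, ∀ q ∈ K, p ≠ q → dist p q < 2) :
    (((2 / α + 1) ^ 2 : ℝ) < K.card →
      ∀ r : Pt → ℝ, (∀ p ∈ P, α ≤ r p ∧ r p ≤ 1) →
        ∃ p q, (diskGraph P r).Adj p q) ∧
    ((6 * (2 / α + 1) ^ 2 : ℝ) < K.card →
      ∀ r : Pt → ℝ, (∀ p ∈ P, α ≤ r p ∧ r p ≤ 1) →
        ¬ (diskGraph P r).IsAcyclic) :=
  stmt_4_general P α hα₀ K hKP hclique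
end

section
/- Let P be a finite set of points in ℝ² and k ∈ ℕ. Suppose there exist k+1 pairwise disjoint subsets C₁,…,C_{k+1} ⊆ P such that for each i the subgraph of the unit disk graph G(P,𝟏) induced on C_i contains a cycle. Then for every S ⊆ P with |S| ≤ k and every r : P → ℝ with r(p) = 1 for all p ∉ S, the open-disk intersection graph G(P,r) contains a cycle (it is not acyclic). -/
open scoped Classical

/-! A set `S` of at most `k` shrunk disks meets at most `k` of the `k + 1` disjoint cycles, so one
cycle of the unit disk graph keeps all its radii equal to `1`. Enlarging the point set and the
radii only adds edges, so this cycle survives in `G(P, r)`. -/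

theorem Finset.exists_disjoint_of_card_lt {ι α : Type*} [Fintype ι] {C : ι → Finset α}
    (hC : Pairwise (Function.onFun Disjoint C)) {S : Finset α} (hS : S.card < Fintype.card ι) :
    ∃ i, Disjoint (C i) S := by
  by_contra! hmeet
  choose s hsC hsS using fun i => Finset.not_disjoint_iff.mp (hmeet i)
  obtain ⟨i, -, j, -, hij, hsij⟩ :=
    Finset.exists_ne_map_eq_of_card_lt_of_maps_to (s := Finset.univ) (by simpa using hS)
      (fun i _ => hsS i)
  exact Finset.disjoint_left.mp (hC hij) (hsC i) (hsij ▸ hsC j)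

namespace diskGraph

variable {Q P : Finset Pt} {r r' : Pt → ℝ}

def homOfLE (hQP : Q ⊆ P) (hr : ∀ x ∈ Q, r x ≤ r' x) : diskGraph Q r →g diskGraph P r' where
  toFun x := ⟨x, hQP x.2⟩
  map_rel' {p q} hpq :=
    ⟨fun h => hpq.1 (Subtype.ext (Subtype.mk.inj h)),
      hpq.2.trans_le (add_le_add (hr p p.2) (hr q q.2))⟩

theorem homOfLE_injective (hQP : Q ⊆ P) (hr : ∀ x ∈ Q, r x ≤ r' x) :
    Function.Injective (homOfLE hQP hr) :=
  fun _ _ h => Subtype.ext (Subtype.mk.inj h)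

theorem IsAcyclic.of_subset (hQP : Q ⊆ P) (hr : ∀ x ∈ Q, r x ≤ r' x)
    (h : (diskGraph P r').IsAcyclic) : (diskGraph Q r).IsAcyclic :=
  h.comap _ (homOfLE_injective hQP hr)

end diskGraph

theorem stmt_6_general (P : Finset Pt) (k : ℕ)
    (C : Fin (k + 1) → Finset Pt)
    (hsub : ∀ i, C i ⊆ P)
    (hdisj : ∀ i j, i ≠ j → Disjoint (C i) (C j))
    (hcyc : ∀ i, ¬ (diskGraph (C i) (fun _ => 1)).IsAcyclic)
    (S : Finset Pt) (hcard : S.card ≤ k)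
    (r : Pt → ℝ) (hr : ∀ x ∈ P, x ∉ S → r x = 1) :
    ¬ (diskGraph P r).IsAcyclic := by
  obtain ⟨i, hiS⟩ : ∃ i, Disjoint (C i) S :=
    Finset.exists_disjoint_of_card_lt hdisj (by simpa [Nat.lt_succ_iff] using hcard)
  have hunit : ∀ x ∈ C i, (1 : ℝ) ≤ r x := fun x hx =>
    (hr x (hsub i hx) (Finset.disjoint_left.mp hiS hx)).ge
  exact fun hacyc => hcyc i (diskGraph.IsAcyclic.of_subset (hsub i) hunit hacyc)

/-- If the unit disk graph on P contains k+1 vertex-disjoint cycles (witnessed by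
pairwise disjoint subsets whose induced unit-disk graphs are not acyclic), then
shrinking at most k disks cannot make the open-disk intersection graph acyclic. -/
theorem stmt_6 (P : Finset Pt) (k : ℕ)
    (C : Fin (k + 1) → Finset Pt)
    (hsub : ∀ i, C i ⊆ P)
    (hdisj : ∀ i j, i ≠ j → Disjoint (C i) (C j))
    (hcyc : ∀ i, ¬ (diskGraph (C i) (fun _ => 1)).IsAcyclic)
    (S : Finset Pt) (hS : S ⊆ P) (hcard : S.card ≤ k)
    (r : Pt → ℝ) (hr : ∀ x ∈ P, x ∉ S → r x = 1) :
    ¬ (diskGraph P r).IsAcyclic :=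
  stmt_6_general P k C hsub hdisj hcyc S hcard r hr
end

section
/- Let P be a finite set of points in ℝ² and let U ⊆ P be a vertex cover of the unit disk graph G(P,𝟏), i.e., for every pair of distinct p,q ∈ P with dist(p,q) < 2, either p ∈ U or q ∈ U. Let T = U ∪ {p ∈ P : there exists q ∈ U with dist(p,q) < 2} (the union of the closed neighborhoods in G(P,𝟏) of the vertices of U). Then |T| ≤ 7|U|. -/
open scoped Classical

/-!
Every point of `T \ U` lies within distance `2` of some `u ∈ U`, and since `U` is a vertex
cover the points of `P \ U` are pairwise at distance at least `2`. So it suffices that an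
open disk of radius `r` contains at most six points with pairwise distances at least `r`:
cutting the disk around its centre into six sectors of angle `π / 3`, two points in one
sector would be at distance `< r` by the law of cosines, since `cos (π / 3) = 1 / 2`.
-/

open Module Real

namespace Complex

theorem dist_lt_of_abs_arg_sub_le {z w : ℂ} {r : ℝ} (hz : ‖z‖ < r) (hw : ‖w‖ < r)
    (harg : |arg z - arg w| ≤ π / 3) : dist z w < r := by
  set a := ‖z‖
  set b := ‖w‖
  have hcos : 1 / 2 ≤ Real.cos (arg z - arg w) := by
    rw [← Real.cos_abs, ← Real.cos_pi_div_three]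
    exact Real.cos_le_cos_of_nonneg_of_le_pi (abs_nonneg _) (by linarith [pi_pos]) harg
  have law_cos : dist z w ^ 2 = a ^ 2 + b ^ 2 - 2 * a * b * Real.cos (arg z - arg w) := by
    rw [dist_eq, Complex.sq_norm, normSq_apply, sub_re, sub_im, ← norm_mul_cos_arg z,
      ← norm_mul_sin_arg z, ← norm_mul_cos_arg w, ← norm_mul_sin_arg w, Real.cos_sub]
    linear_combination a ^ 2 * Real.sin_sq_add_cos_sq (arg z)
      + b ^ 2 * Real.sin_sq_add_cos_sq (arg w)
  have hsq : dist z w ^ 2 < r ^ 2 := by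
    rw [law_cos]
    -- `a ^ 2 + b ^ 2 - a * b ≤ max a b ^ 2`
    nlinarith [norm_nonneg z, norm_nonneg w, mul_nonneg (norm_nonneg z) (norm_nonneg w)]
  exact lt_of_pow_lt_pow_left₀ 2 ((norm_nonneg z).trans hz.le) hsq

theorem card_le_six_of_pairwise_le_dist {s : Finset ℂ} {r : ℝ} (hs : ∀ z ∈ s, ‖z‖ < r)
    (hsep : (s : Set ℂ).Pairwise fun z w => r ≤ dist z w) : s.card ≤ 6 := by
  have hπ : 0 < π / 3 := by positivity
  calc s.card ≤ (Finset.Ioc (-3 : ℤ) 3).card := by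
        refine Finset.card_le_card_of_injOn (fun z => ⌈arg z / (π / 3)⌉) ?_ ?_
        · intro z _
          rw [Finset.coe_Ioc, Set.mem_Ioc, Int.lt_ceil, Int.ceil_le, lt_div_iff₀ hπ,
            div_le_iff₀ hπ]
          push_cast
          constructor <;> linarith [neg_pi_lt_arg z, arg_le_pi z]
        · intro z hz w hw hsector
          by_contra hne
          have hfloor : ⌊-(arg z / (π / 3))⌋ = ⌊-(arg w / (π / 3))⌋ := by
            rw [Int.floor_neg, Int.floor_neg]
            exact congrArg Neg.neg hsector
          have hlt := Int.abs_sub_lt_one_of_floor_eq_floor hfloor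
          rw [neg_sub_neg, abs_sub_comm, ← sub_div, abs_div, abs_of_pos hπ, div_lt_one hπ] at hlt
          exact (hsep hz hw hne).not_gt (dist_lt_of_abs_arg_sub_le (hs z hz) (hs w hw) hlt.le)
    _ = 6 := rfl

end Complex

theorem card_le_six_of_pairwise_le_dist {F : Type*} [NormedAddCommGroup F]
    [InnerProductSpace ℝ F] (hF : finrank ℝ F = 2) {s : Finset F} {c : F} {r : ℝ}
    (hs : ∀ x ∈ s, dist x c < r) (hsep : (s : Set F).Pairwise fun x y => r ≤ dist x y) :
    s.card ≤ 6 := by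
  have := Module.finite_of_finrank_eq_succ hF
  let e : F ≃ₗᵢ[ℝ] ℂ :=
    (Complex.isometryOfOrthonormal ((stdOrthonormalBasis ℝ F).reindex (finCongr hF))).symm
  have he : Isometry fun x => e (x - c) := e.isometry.comp (IsometryEquiv.subRight c).isometry
  rw [← Finset.card_image_of_injective s he.injective]
  apply Complex.card_le_six_of_pairwise_le_dist
  · simpa [← dist_eq_norm] using hs
  · rw [Finset.coe_image, he.injective.injOn.pairwise_image]
    intro x hx y hy hne
    simpa only [Function.onFun, he.dist_eq] using hsep hx hy hne

theorem stmt_12_general (P U T : Finset Pt)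
    (hcover : ∀ p ∈ P, ∀ q ∈ P, p ≠ q → dist p q < 2 → p ∈ U ∨ q ∈ U)
    (hT : ∀ p, p ∈ T ↔ p ∈ U ∨ (p ∈ P ∧ ∃ q ∈ U, dist p q < 2)) :
    T.card ≤ 7 * U.card := by
  set N : Pt → Finset Pt := fun u => (P \ U).filter (dist · u < 2)
  have hT_sub : T ⊆ U ∪ U.biUnion N := by
    intro p hp
    by_cases hpU : p ∈ U
    · exact Finset.mem_union_left _ hpU
    obtain ⟨hpP, u, hu, hpu⟩ := ((hT p).1 hp).resolve_left hpU
    exact Finset.mem_union_right _ (Finset.mem_biUnion.2 ⟨u, hu, by simp [N, *]⟩)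
  have hindep : ((P \ U : Finset Pt) : Set Pt).Pairwise fun p q => 2 ≤ dist p q := by
    intro p hp q hq hpq
    simp only [Finset.coe_sdiff, Set.mem_sdiff, Finset.mem_coe] at hp hq
    by_contra! hlt
    exact (hcover p hp.1 q hq.1 hpq hlt).elim hp.2 hq.2
  have hN : ∀ u ∈ U, (N u).card ≤ 6 := fun u _ =>
    card_le_six_of_pairwise_le_dist finrank_euclideanSpace_fin (c := u)
      (fun p hp => (Finset.mem_filter.1 hp).2)
      (hindep.mono (Finset.coe_subset.2 (Finset.filter_subset _ _)))
  calc T.card ≤ (U ∪ U.biUnion N).card := Finset.card_le_card hT_sub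
    _ ≤ U.card + ∑ u ∈ U, (N u).card :=
        (Finset.card_union_le _ _).trans (Nat.add_le_add_left Finset.card_biUnion_le _)
    _ ≤ U.card + ∑ _u ∈ U, 6 := by gcongr with u hu; exact hN u hu
    _ = 7 * U.card := by rw [Finset.sum_const, smul_eq_mul]; ring

/-- If U is a vertex cover of the unit disk graph G(P,𝟏) and T is the union of the
closed neighborhoods of the vertices of U, then |T| ≤ 7|U|. -/
theorem stmt_12 (P U T : Finset Pt) (hUP : U ⊆ P)
    (hcover : ∀ p ∈ P, ∀ q ∈ P, p ≠ q → dist p q < 2 → p ∈ U ∨ q ∈ U)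
    (hT : ∀ p, p ∈ T ↔ p ∈ U ∨ (p ∈ P ∧ ∃ q ∈ U, dist p q < 2)) :
    T.card ≤ 7 * U.card :=
  stmt_12_general P U T hcover hT
end

section
/- Let P be a finite set of points in ℝ², let 0 ≤ α ≤ 1 and k ∈ ℕ. Let U ⊆ P be a vertex cover of the unit disk graph G(P,𝟏) (every pair of distinct p,q ∈ P with dist(p,q) < 2 has p ∈ U or q ∈ U), and let T = U ∪ {p ∈ P : there exists q ∈ U with dist(p,q) < 2}. Then there exists S ⊆ P with |S| ≤ k such that the open-disk intersection graph G(P, r_S) is edgeless — where r_S(p) = α for p ∈ S and r_S(p) = 1 otherwise — if and only if there exists S' ⊆ T with |S'| ≤ k such that G(T, r_{S'}) is edgeless, with r_{S'} defined analogously on T. -/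
open scoped Classical

/-!
With radii at most `1`, every edge of `G(P, r)` is an edge of the unit disk graph, so it has an
endpoint in the vertex cover `U` and hence both endpoints in `T`; thus `G(P, r_S)` is edgeless
iff its restriction to `T` is. Conversely, `r_S` and `r_{S ∩ T}` agree on `T`, so a solution
on `P` restricts to one on `T`.
-/

namespace diskGraph

variable {P Q : Finset Pt} {r : Pt → ℝ}

theorem congr_radius {r' : Pt → ℝ} (h : ∀ x ∈ P, r x = r' x) :
    diskGraph P r = diskGraph P r' := by
  ext a b
  simp only [diskGraph, h a a.2, h b b.2]

theorem adj_mk_iff_of_subset (hQP : Q ⊆ P) {a b : Pt} (ha : a ∈ Q) (hb : b ∈ Q) :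
    (diskGraph Q r).Adj ⟨a, ha⟩ ⟨b, hb⟩ ↔ (diskGraph P r).Adj ⟨a, hQP ha⟩ ⟨b, hQP hb⟩ := by
  simp only [diskGraph, ne_eq, Subtype.mk.injEq]

theorem dist_lt_two_of_adj (hr : ∀ x, r x ≤ 1) {a b : {x // x ∈ P}}
    (hab : (diskGraph P r).Adj a b) : dist (a : Pt) b < 2 :=
  calc dist (a : Pt) b < r a + r b := hab.2
    _ ≤ 1 + 1 := add_le_add (hr a) (hr b)
    _ = 2 := one_add_one_eq_two

theorem forall_not_adj_of_subset (hQP : Q ⊆ P) (hP : ∀ a b, ¬ (diskGraph P r).Adj a b) :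
    ∀ a b, ¬ (diskGraph Q r).Adj a b :=
  fun ⟨_, ha⟩ ⟨_, hb⟩ hab => hP _ _ ((adj_mk_iff_of_subset hQP ha hb).1 hab)

theorem forall_not_adj_of_endpoints_mem (hQP : Q ⊆ P)
    (hedge : ∀ a b, (diskGraph P r).Adj a b → (a : Pt) ∈ Q ∧ (b : Pt) ∈ Q)
    (hQ : ∀ a b, ¬ (diskGraph Q r).Adj a b) : ∀ a b, ¬ (diskGraph P r).Adj a b := by
  intro a b hab
  obtain ⟨haQ, hbQ⟩ := hedge a b hab
  exact hQ ⟨a, haQ⟩ ⟨b, hbQ⟩ ((adj_mk_iff_of_subset hQP haQ hbQ).2 hab)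

end diskGraph

noncomputable def shrinkRadius (S : Finset Pt) (α : ℝ) (x : Pt) : ℝ := if x ∈ S then α else 1

theorem shrinkRadius_le_one {S : Finset Pt} {α : ℝ} (hα : α ≤ 1) (x : Pt) :
    shrinkRadius S α x ≤ 1 := by
  unfold shrinkRadius
  split_ifs
  exacts [hα, le_rfl]

theorem shrinkRadius_inter {S T : Finset Pt} {α : ℝ} {x : Pt} (hx : x ∈ T) :
    shrinkRadius (S ∩ T) α x = shrinkRadius S α x := by
  simp only [shrinkRadius, Finset.mem_inter, hx, and_true]

theorem mem_of_isVertexCover {P U T : Finset Pt}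
    (hcover : ∀ p ∈ P, ∀ q ∈ P, p ≠ q → dist p q < 2 → p ∈ U ∨ q ∈ U)
    (hT : ∀ p, p ∈ T ↔ p ∈ U ∨ (p ∈ P ∧ ∃ q ∈ U, dist p q < 2))
    {p q : Pt} (hp : p ∈ P) (hq : q ∈ P) (hpq : p ≠ q) (hd : dist p q < 2) : p ∈ T := by
  rcases hcover p hp q hq hpq hd with hpU | hqU
  · exact (hT p).2 (Or.inl hpU)
  · exact (hT p).2 (Or.inr ⟨hp, q, hqU, hd⟩)

theorem mem_of_adj_of_isVertexCover {P U T : Finset Pt} {r : Pt → ℝ} (hr : ∀ x, r x ≤ 1)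
    (hcover : ∀ p ∈ P, ∀ q ∈ P, p ≠ q → dist p q < 2 → p ∈ U ∨ q ∈ U)
    (hT : ∀ p, p ∈ T ↔ p ∈ U ∨ (p ∈ P ∧ ∃ q ∈ U, dist p q < 2))
    {a b : {x // x ∈ P}} (hab : (diskGraph P r).Adj a b) : (a : Pt) ∈ T ∧ (b : Pt) ∈ T :=
  have hd := diskGraph.dist_lt_two_of_adj hr hab
  have hne : (a : Pt) ≠ b := fun h => hab.1 (Subtype.ext h)
  ⟨mem_of_isVertexCover hcover hT a.2 b.2 hne hd,
    mem_of_isVertexCover hcover hT b.2 a.2 hne.symm (by rwa [dist_comm])⟩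

theorem stmt_13_general (P : Finset Pt) (α : ℝ) (hα₁ : α ≤ 1) (k : ℕ)
    (U T : Finset Pt) (hUP : U ⊆ P)
    (hcover : ∀ p ∈ P, ∀ q ∈ P, p ≠ q → dist p q < 2 → p ∈ U ∨ q ∈ U)
    (hT : ∀ p, p ∈ T ↔ p ∈ U ∨ (p ∈ P ∧ ∃ q ∈ U, dist p q < 2)) :
    (∃ S ⊆ P, S.card ≤ k ∧
        ∀ a b, ¬ (diskGraph P (fun x => if x ∈ S then α else 1)).Adj a b) ↔
    (∃ S' ⊆ T, S'.card ≤ k ∧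
        ∀ a b, ¬ (diskGraph T (fun x => if x ∈ S' then α else 1)).Adj a b) := by
  have hTP : T ⊆ P := fun p hp => ((hT p).1 hp).elim (fun h => hUP h) And.left
  constructor
  · rintro ⟨S, -, hSk, hS⟩
    refine ⟨S ∩ T, Finset.inter_subset_right,
      (Finset.card_le_card Finset.inter_subset_left).trans hSk, ?_⟩
    change ∀ a b, ¬ (diskGraph T (shrinkRadius (S ∩ T) α)).Adj a b
    rw [diskGraph.congr_radius fun x hx => shrinkRadius_inter hx]
    exact diskGraph.forall_not_adj_of_subset hTP hS
  · rintro ⟨S', hS'T, hS'k, hS'⟩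
    exact ⟨S', hS'T.trans hTP, hS'k, diskGraph.forall_not_adj_of_endpoints_mem hTP
      (fun _ _ => mem_of_adj_of_isVertexCover (shrinkRadius_le_one hα₁) hcover hT) hS'⟩

/-- Instance equivalence of the partial kernel for k-Shrinking to Independence:
(P,α,k) admits a solution iff the reduced instance (T,α,k) does, where T is the union
of the closed neighborhoods of a vertex cover U of G(P,𝟏). -/
theorem stmt_13 (P : Finset Pt) (α : ℝ) (hα₀ : 0 ≤ α) (hα₁ : α ≤ 1) (k : ℕ)
    (U T : Finset Pt) (hUP : U ⊆ P)
    (hcover : ∀ p ∈ P, ∀ q ∈ P, p ≠ q → dist p q < 2 → p ∈ U ∨ q ∈ U)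
    (hT : ∀ p, p ∈ T ↔ p ∈ U ∨ (p ∈ P ∧ ∃ q ∈ U, dist p q < 2)) :
    (∃ S ⊆ P, S.card ≤ k ∧
        ∀ a b, ¬ (diskGraph P (fun x => if x ∈ S then α else 1)).Adj a b) ↔
    (∃ S' ⊆ T, S'.card ≤ k ∧
        ∀ a b, ¬ (diskGraph T (fun x => if x ∈ S' then α else 1)).Adj a b) :=
  stmt_13_general P α hα₁ k U T hUP hcover hT
end

section
/- Let 0 < α ≤ 1, let v ∈ ℝ², and let U be a finite set of points in ℝ² with dist(u,v) ≤ 2 for every u ∈ U. Then: (1) there exists Y ⊆ U with |Y| ≤ 9 such that for every u ∈ U there is y ∈ Y with dist(u,y) ≤ 2; and (2) there exists Z ⊆ U with |Z| ≤ (2/α + 1)² such that for every u ∈ U there is z ∈ Z with dist(u,z) ≤ 2α. -/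
open scoped Classical

/-!
A maximal `2ρ`-separated subset `Z` of `U` is automatically a `2ρ`-cover of `U`. The closed
`ρ`-balls around the points of `Z` are pairwise disjoint and lie in the ball of radius `R + ρ`
around `v`, so comparing Haar volumes in dimension `d` gives `|Z| ρ^d ≤ (R + ρ)^d`. In the plane
with `R = 2` this is `|Z| ≤ (2/ρ + 1)²`; the case `ρ = 1` gives the bound `9`.
-/

open Metric MeasureTheory Measure Module
open scoped NNReal

theorem Finset.exists_subset_pairwise_lt_dist_and_forall_exists_dist_le {X : Type*}
    [PseudoMetricSpace X] (U : Finset X) (r : ℝ≥0) :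
    ∃ Z ⊆ U, (Z : Set X).Pairwise (r < dist · ·) ∧ ∀ u ∈ U, ∃ z ∈ Z, dist u z ≤ r := by
  have hfin : {N : Set X | N ⊆ U ∧ IsSeparated r N}.Finite :=
    U.finite_toSet.finite_subsets.subset fun N hN => hN.1
  obtain ⟨N, hN⟩ := hfin.exists_maximal ⟨∅, Set.empty_subset _, .empty⟩
  have hcover : IsCover r U N := .of_maximal_isSeparated hN
  lift N to Finset X using U.finite_toSet.subset hN.1.1
  refine ⟨N, mod_cast hN.1.1, ?_, fun u hu => ?_⟩
  · exact hN.1.2.mono' fun a b h => by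
      rwa [edist_nndist, ENNReal.coe_lt_coe, ← NNReal.coe_lt_coe, coe_nndist] at h
  · obtain ⟨z, hz, hd⟩ := hcover (Finset.mem_coe.2 hu)
    refine ⟨z, hz, ?_⟩
    change edist u z ≤ r at hd
    rwa [edist_nndist, ENNReal.coe_le_coe, ← NNReal.coe_le_coe, coe_nndist] at hd

theorem Finset.card_mul_pow_finrank_le_of_pairwise_lt_dist {E : Type*} [NormedAddCommGroup E]
    [NormedSpace ℝ E] [FiniteDimensional ℝ E] [MeasurableSpace E] [BorelSpace E]
    (μ : Measure E) [μ.IsAddHaarMeasure] {Z : Finset E} {v : E} {ρ R : ℝ} (hρ : 0 ≤ ρ)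
    (hR : 0 ≤ R) (hZ : ∀ z ∈ Z, dist z v ≤ R) (hsep : (Z : Set E).Pairwise (2 * ρ < dist · ·)) :
    Z.card * ρ ^ finrank ℝ E ≤ (R + ρ) ^ finrank ℝ E := by
  have hdisj : (Z : Set E).PairwiseDisjoint (closedBall · ρ) := fun a ha b hb hab =>
    closedBall_disjoint_closedBall (by linarith [hsep ha hb hab])
  have hsub : (⋃ z ∈ Z, closedBall z ρ) ⊆ closedBall v (R + ρ) :=
    Set.iUnion₂_subset fun z hz => closedBall_subset_closedBall' (by linarith [hZ z hz])
  set c := μ.real (closedBall 0 1)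
  have hc : 0 < c :=
    ENNReal.toReal_pos (measure_closedBall_pos μ 0 one_pos).ne' measure_closedBall_lt_top.ne
  have key : Z.card * ρ ^ finrank ℝ E * c ≤ (R + ρ) ^ finrank ℝ E * c := calc
    Z.card * ρ ^ finrank ℝ E * c = ∑ z ∈ Z, μ.real (closedBall z ρ) := by
      rw [Finset.sum_congr rfl fun z _ => addHaar_real_closedBall' μ z hρ, Finset.sum_const,
        nsmul_eq_mul, mul_assoc]
    _ = μ.real (⋃ z ∈ Z, closedBall z ρ) :=
      (measureReal_biUnion_finset hdisj (fun _ _ => measurableSet_closedBall)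
        fun _ _ => measure_closedBall_lt_top.ne).symm
    _ ≤ μ.real (closedBall v (R + ρ)) := measureReal_mono hsub measure_closedBall_lt_top.ne
    _ = (R + ρ) ^ finrank ℝ E * c := addHaar_real_closedBall' μ v (by linarith)
  exact le_of_mul_le_mul_right key hc

theorem Finset.exists_subset_card_le_and_forall_exists_dist_le {E : Type*}
    [NormedAddCommGroup E] [NormedSpace ℝ E] [FiniteDimensional ℝ E] (U : Finset E) {v : E}
    {ρ R : ℝ} (hρ : 0 < ρ) (hR : 0 ≤ R) (hU : ∀ u ∈ U, dist u v ≤ R) :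
    ∃ Z ⊆ U, (Z.card : ℝ) ≤ (R / ρ + 1) ^ finrank ℝ E ∧ ∀ u ∈ U, ∃ z ∈ Z, dist u z ≤ 2 * ρ := by
  borelize E
  obtain ⟨Z, hZU, hsep, hcover⟩ :=
    U.exists_subset_pairwise_lt_dist_and_forall_exists_dist_le ⟨2 * ρ, by positivity⟩
  refine ⟨Z, hZU, ?_, hcover⟩
  rw [div_add_one hρ.ne', div_pow, le_div_iff₀ (by positivity)]
  exact card_mul_pow_finrank_le_of_pairwise_lt_dist addHaar hρ.le hR (fun z hz => hU z (hZU hz))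
    hsep

theorem stmt_16_general (α : ℝ) (hα₀ : 0 < α)
    (v : Pt) (U : Finset Pt) (hU : ∀ u ∈ U, dist u v ≤ 2) :
    (∃ Y ⊆ U, Y.card ≤ 9 ∧ ∀ u ∈ U, ∃ y ∈ Y, dist u y ≤ 2) ∧
    (∃ Z ⊆ U, (Z.card : ℝ) ≤ (2 / α + 1) ^ 2 ∧ ∀ u ∈ U, ∃ z ∈ Z, dist u z ≤ 2 * α) := by
  have h (ρ : ℝ) (hρ : 0 < ρ) :=
    U.exists_subset_card_le_and_forall_exists_dist_le hρ zero_le_two hU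
  simp only [finrank_euclideanSpace_fin] at h
  refine ⟨?_, h α hα₀⟩
  obtain ⟨Y, hYU, hY, hdom⟩ := h 1 one_pos
  norm_num at hY hdom
  exact ⟨Y, hYU, mod_cast hY, hdom⟩

/-- Domination within a closed neighborhood: (1) there are at most 9 points of U
dominating U in the closed unit-disk graph, and (2) at most (2/α+1)² points of U
dominating U after shrinking all disks to radius α. -/
theorem stmt_16 (α : ℝ) (hα₀ : 0 < α) (hα₁ : α ≤ 1)
    (v : Pt) (U : Finset Pt) (hU : ∀ u ∈ U, dist u v ≤ 2) :
    (∃ Y ⊆ U, Y.card ≤ 9 ∧ ∀ u ∈ U, ∃ y ∈ Y, dist u y ≤ 2) ∧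
    (∃ Z ⊆ U, (Z.card : ℝ) ≤ (2 / α + 1) ^ 2 ∧ ∀ u ∈ U, ∃ z ∈ Z, dist u z ≤ 2 * α) :=
  stmt_16_general α hα₀ v U hU
end

section
/- Let P be a finite set of points in ℝ² and let 0 < α ≤ 1. For S ⊆ P, define r_S : P → ℝ by r_S(p) = α if p ∈ S and r_S(p) = 1 otherwise, and let G_S be the closed-disk intersection graph of (P, r_S); call S a solution if G_S is connected. Let v ∈ P and let S be a solution of maximum cardinality among all solutions. Then |{u ∈ P : dist(u,v) ≤ 2} \ S| ≤ 9(4/α + 1)² + 9. -/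
/-!
Shrinking one more disk `w ∉ S` of a maximum solution `S` disconnects the graph, cutting off a
set `Z w` of vertices from `v`. Either `w ∈ Z w`, or `w` has a neighbour `b ∈ Z w` at distance
more than `2α` (a pendant edge that the shrinking breaks). Since shrinking only removes edges at
the shrunk vertex, `u ∈ Z w` forces `Z u ⊆ Z w`, and following a crossing edge of `Z w` shows that
two self-cut vertices, as well as the pendants of two non-self-cut vertices, are more than `2α`
apart. Both families lie within distance `4` of `v`, so a volume comparison of disjoint disks of
radius `α` bounds each of them by `(4/α + 1)²`.
-/

open scoped Classical

/-- The closed-disk intersection graph of the points of `P` with radius assignment `r`: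
distinct points `p, q ∈ P` are adjacent iff `dist p q ≤ r p + r q`. -/
def closedDiskGraph (P : Finset Pt) (r : Pt → ℝ) : SimpleGraph {x : Pt // x ∈ P} where
  Adj p q := p ≠ q ∧ dist (p : Pt) (q : Pt) ≤ r p + r q
  symm := ⟨fun p q h => ⟨h.1.symm, by rw [dist_comm, add_comm]; exact h.2⟩⟩
  loopless := ⟨fun p h => h.1 rfl⟩

open Metric MeasureTheory Module

namespace SimpleGraph

variable {V : Type*}

def unreachableSet (K : SimpleGraph V) (v : V) : Set V :=
  {x | ¬ K.Reachable x v}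

structure IsLocalThinning (G : SimpleGraph V) (H : V → SimpleGraph V) : Prop where
  le : ∀ w, H w ≤ G
  adj : ∀ ⦃w a b⦄, G.Adj a b → a ≠ w → b ≠ w → (H w).Adj a b

variable {K G : SimpleGraph V} {H : V → SimpleGraph V} {u v w a b z : V}

theorem notMem_unreachableSet_self : v ∉ K.unreachableSet v :=
  fun h => h .rfl

theorem mem_unreachableSet_of_adj (hab : K.Adj a b) (hb : b ∈ K.unreachableSet v) :
    a ∈ K.unreachableSet v :=
  fun ha => hb (hab.symm.reachable.trans ha)

theorem unreachableSet_nonempty (hK : ¬ K.Connected) : (K.unreachableSet v).Nonempty := by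
  refine not_not.1 fun h => hK ((connected_iff_exists_forall_reachable _).2 ⟨v, fun x => ?_⟩)
  exact (not_not.1 fun hx => h ⟨x, hx⟩).symm

theorem Preconnected.exists_adj_boundary (hG : G.Preconnected) {Z : Set V} (hv : v ∉ Z)
    (hz : z ∈ Z) : ∃ a b, a ∉ Z ∧ b ∈ Z ∧ G.Adj a b := by
  obtain ⟨p⟩ := hG z v
  obtain ⟨d, -, hd, hd'⟩ := p.exists_boundary_dart Z hz hv
  exact ⟨d.snd, d.fst, hd', hd, d.adj.symm⟩

namespace IsLocalThinning

theorem eq_or_eq_of_adj (hH : G.IsLocalThinning H) (hab : G.Adj a b)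
    (ha : a ∉ (H w).unreachableSet v) (hb : b ∈ (H w).unreachableSet v) : a = w ∨ b = w := by
  by_contra! h
  exact ha (mem_unreachableSet_of_adj (hH.adj hab h.1 h.2) hb)

/-- A walk to `v` in `H w` avoids `u ∈ Z w`, so all its edges survive in `H u`. -/
theorem unreachableSet_subset (hH : G.IsLocalThinning H) (hu : u ∈ (H w).unreachableSet v) :
    (H u).unreachableSet v ⊆ (H w).unreachableSet v := by
  rintro x hx ⟨p⟩
  have hne : ∀ y ∈ p.support, y ≠ u := fun y hy hyu => hu (hyu ▸ ⟨p.dropUntil y hy⟩)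
  refine hx ⟨p.transfer (H u) fun e he => ?_⟩
  induction e using Sym2.ind with
  | _ a b =>
    exact hH.adj (hH.le w (p.edges_subset_edgeSet he))
      (hne a (p.fst_mem_support_of_mem_edges he)) (hne b (p.snd_mem_support_of_mem_edges he))

theorem eq_of_mem_unreachableSet (hH : G.IsLocalThinning H) (hG : G.Preconnected)
    (hu : u ∈ (H w).unreachableSet v) (hw : w ∈ (H u).unreachableSet v) : u = w := by
  have hZ : (H u).unreachableSet v = (H w).unreachableSet v :=
    (hH.unreachableSet_subset hu).antisymm (hH.unreachableSet_subset hw)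
  obtain ⟨a, b, ha, hb, hab⟩ := hG.exists_adj_boundary notMem_unreachableSet_self hu
  have hbw := (hH.eq_or_eq_of_adj hab ha hb).resolve_left fun h => ha (by rw [h, ← hZ]; exact hw)
  have hbu := (hH.eq_or_eq_of_adj hab (hZ ▸ ha) (hZ ▸ hb)).resolve_left fun h => ha (h ▸ hu)
  exact hbu.symm.trans hbw

theorem exists_adj_mem_unreachableSet (hH : G.IsLocalThinning H) (hG : G.Preconnected)
    (hw : w ∉ (H w).unreachableSet v) (hne : ((H w).unreachableSet v).Nonempty) :
    ∃ b ∈ (H w).unreachableSet v, G.Adj w b := by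
  obtain ⟨z, hz⟩ := hne
  obtain ⟨a, b, ha, hb, hab⟩ := hG.exists_adj_boundary notMem_unreachableSet_self hz
  obtain rfl : a = w := (hH.eq_or_eq_of_adj hab ha hb).resolve_right fun h => hw (h ▸ hb)
  exact ⟨b, hb, hab⟩

end IsLocalThinning

end SimpleGraph

theorem Finset.card_le_of_separated {E ι : Type*} [NormedAddCommGroup E] [NormedSpace ℝ E]
    [FiniteDimensional ℝ E] (s : Finset ι) (f : ι → E) {c : E} {R ρ : ℝ} (hR : 0 ≤ R)
    (hρ : 0 < ρ) (hs : ∀ i ∈ s, dist (f i) c ≤ R)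
    (hsep : ∀ i ∈ s, ∀ j ∈ s, i ≠ j → 2 * ρ ≤ dist (f i) (f j)) :
    (s.card : ℝ) ≤ ((R + ρ) / ρ) ^ finrank ℝ E := by
  borelize E
  let μ : Measure E := Measure.addHaar
  have hdisj : Set.PairwiseDisjoint (s : Set ι) fun i => ball (f i) ρ :=
    fun i hi j hj hij => ball_disjoint_ball (by linarith [hsep i hi j hj hij])
  have hsub : (⋃ i ∈ s, ball (f i) ρ) ⊆ ball c (R + ρ) :=
    Set.iUnion₂_subset fun i hi => ball_subset_ball' (by linarith [hs i hi])
  have hvol : (s.card : ENNReal) * ENNReal.ofReal (ρ ^ finrank ℝ E) * μ (ball 0 1) ≤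
      ENNReal.ofReal ((R + ρ) ^ finrank ℝ E) * μ (ball 0 1) :=
    calc (s.card : ENNReal) * ENNReal.ofReal (ρ ^ finrank ℝ E) * μ (ball 0 1)
        = μ (⋃ i ∈ s, ball (f i) ρ) := by
          rw [measure_biUnion_finset hdisj fun _ _ => measurableSet_ball]
          simp only [μ.addHaar_ball_of_pos _ hρ, Finset.sum_const, nsmul_eq_mul, mul_assoc]
      _ ≤ μ (ball c (R + ρ)) := measure_mono hsub
      _ = ENNReal.ofReal ((R + ρ) ^ finrank ℝ E) * μ (ball 0 1) :=
          μ.addHaar_ball_of_pos _ (by linarith)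
  have hcard : (s.card : ENNReal) * ENNReal.ofReal (ρ ^ finrank ℝ E) ≤
      ENNReal.ofReal ((R + ρ) ^ finrank ℝ E) :=
    (ENNReal.mul_le_mul_iff_left (measure_ball_pos _ _ zero_lt_one).ne' measure_ball_lt_top.ne).1
      hvol
  have hreal := ENNReal.toReal_le_of_le_ofReal (by positivity) hcard
  rw [ENNReal.toReal_mul, ENNReal.toReal_ofReal (by positivity)] at hreal
  rw [div_pow, le_div_iff₀ (by positivity)]
  simpa using hreal

theorem card_le_of_separated_of_dist_le_four {ι : Type*} (s : Finset ι) (f : ι → Pt) {c : Pt}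
    {α : ℝ} (hα : 0 < α) (hs : ∀ i ∈ s, dist (f i) c ≤ 4)
    (hsep : ∀ i ∈ s, ∀ j ∈ s, i ≠ j → 2 * α < dist (f i) (f j)) :
    (s.card : ℝ) ≤ (4 / α + 1) ^ 2 := by
  have h := s.card_le_of_separated f (by norm_num) hα hs fun i hi j hj hij =>
    (hsep i hi j hj hij).le
  rwa [finrank_euclideanSpace_fin, add_div, div_self hα.ne'] at h

noncomputable def radius (α : ℝ) (S : Finset Pt) (x : Pt) : ℝ :=
  if x ∈ S then α else 1

/-- The paper's `G_S`. -/
noncomputable def shrunkGraph (P : Finset Pt) (α : ℝ) (S : Finset Pt) :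
    SimpleGraph {x : Pt // x ∈ P} :=
  closedDiskGraph P (radius α S)

section Radius

variable {α : ℝ} {S : Finset Pt} {x w : Pt}

theorem le_radius (hα : α ≤ 1) (x : Pt) : α ≤ radius α S x := by
  unfold radius; split_ifs <;> linarith

theorem radius_le_one (hα : α ≤ 1) (x : Pt) : radius α S x ≤ 1 := by
  unfold radius; split_ifs <;> linarith

theorem radius_of_notMem (hx : x ∉ S) : radius α S x = 1 :=
  if_neg hx

theorem radius_insert_self : radius α (insert w S) w = α :=
  if_pos (Finset.mem_insert_self w S)

theorem radius_insert_of_ne (hx : x ≠ w) : radius α (insert w S) x = radius α S x := by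
  simp [radius, hx]

theorem radius_insert_le (hα : α ≤ 1) : radius α (insert w S) x ≤ radius α S x := by
  by_cases hx : x = w
  · subst hx
    exact radius_insert_self.trans_le (le_radius hα x)
  · exact (radius_insert_of_ne hx).le

end Radius

section ShrunkGraph

variable {P S : Finset Pt} {α : ℝ} {u v w a b : {x : Pt // x ∈ P}}

theorem shrunkGraph_adj_of_dist_le (hα : α ≤ 1) (hab : a ≠ b) (h : dist (a : Pt) b ≤ 2 * α) :
    (shrunkGraph P α S).Adj a b :=
  ⟨hab, by linarith [le_radius (S := S) hα a, le_radius (S := S) hα b]⟩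

theorem dist_le_two_of_shrunkGraph_adj (hα : α ≤ 1) (h : (shrunkGraph P α S).Adj a b) :
    dist (a : Pt) b ≤ 2 := by
  linarith [h.2, radius_le_one (S := S) hα a, radius_le_one (S := S) hα b]

theorem shrunkGraph_insert_adj (hα : α ≤ 1) (hu : (u : Pt) ∉ S) (huw : u ≠ w)
    (h : dist (u : Pt) w ≤ 2 * α) : (shrunkGraph P α (insert (w : Pt) S)).Adj u w := by
  refine ⟨huw, ?_⟩
  rw [radius_insert_of_ne (Subtype.coe_injective.ne huw), radius_of_notMem hu, radius_insert_self]
  linarith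

theorem isLocalThinning_shrunkGraph (hα : α ≤ 1) :
    (shrunkGraph P α S).IsLocalThinning fun w => shrunkGraph P α (insert (w : Pt) S) where
  le w _ _ h := ⟨h.1, h.2.trans (add_le_add (radius_insert_le hα) (radius_insert_le hα))⟩
  adj w _ _ h ha hb := ⟨h.1, by
    rw [radius_insert_of_ne (Subtype.coe_injective.ne ha),
      radius_insert_of_ne (Subtype.coe_injective.ne hb)]
    exact h.2⟩

theorem two_mul_lt_dist_of_mem_unreachableSet_self (hα : α ≤ 1)
    (hG : (shrunkGraph P α S).Preconnected) (hu : (u : Pt) ∉ S) (hw : (w : Pt) ∉ S) (huw : u ≠ w)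
    (hu' : u ∈ (shrunkGraph P α (insert (u : Pt) S)).unreachableSet v)
    (hw' : w ∈ (shrunkGraph P α (insert (w : Pt) S)).unreachableSet v) :
    2 * α < dist (u : Pt) w := by
  by_contra! h
  have huw' := SimpleGraph.mem_unreachableSet_of_adj (shrunkGraph_insert_adj hα hu huw h) hw'
  have hwu' := SimpleGraph.mem_unreachableSet_of_adj
    (shrunkGraph_insert_adj hα hw huw.symm (by rwa [dist_comm])) hu'
  exact huw ((isLocalThinning_shrunkGraph hα).eq_of_mem_unreachableSet hG huw' hwu')

/-- `wb` is an edge of `G_S` that shrinking `w` breaks, cutting `b` off from `v`. -/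
def IsPendant {P : Finset Pt} (α : ℝ) (S : Finset Pt) (v w b : {x : Pt // x ∈ P}) : Prop :=
  b ∈ (shrunkGraph P α (insert (w : Pt) S)).unreachableSet v ∧
    (shrunkGraph P α S).Adj w b ∧ 2 * α < dist (w : Pt) b

theorem exists_isPendant (hα : α ≤ 1) (hG : (shrunkGraph P α S).Preconnected)
    (hw : w ∉ (shrunkGraph P α (insert (w : Pt) S)).unreachableSet v)
    (hne : ((shrunkGraph P α (insert (w : Pt) S)).unreachableSet v).Nonempty) :
    ∃ b, IsPendant α S v w b := by
  obtain ⟨b, hb, hwb⟩ := (isLocalThinning_shrunkGraph hα).exists_adj_mem_unreachableSet hG hw hne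
  exact ⟨b, hb, hwb, lt_of_not_ge fun h =>
    hw (SimpleGraph.mem_unreachableSet_of_adj (shrunkGraph_adj_of_dist_le hα hwb.ne h) hb)⟩

theorem IsPendant.two_mul_lt_dist (hα : α ≤ 1) (hG : (shrunkGraph P α S).Preconnected)
    (huw : u ≠ w) (hu : u ∉ (shrunkGraph P α (insert (u : Pt) S)).unreachableSet v)
    (hw : w ∉ (shrunkGraph P α (insert (w : Pt) S)).unreachableSet v)
    (ha : IsPendant α S v u a) (hb : IsPendant α S v w b) : 2 * α < dist (a : Pt) b := by
  have hH := isLocalThinning_shrunkGraph (P := P) (S := S) hα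
  wlog huZ : u ∉ (shrunkGraph P α (insert (w : Pt) S)).unreachableSet v generalizing u w a b
  · have hwZ : w ∉ (shrunkGraph P α (insert (u : Pt) S)).unreachableSet v :=
      fun h => huw (hH.eq_of_mem_unreachableSet hG (not_not.1 huZ) h)
    rw [dist_comm]
    exact this huw.symm hw hu hb ha hwZ
  by_contra! h
  have haw : a ≠ w := by rintro rfl; linarith [hb.2.2]
  have ha' : a ∉ (shrunkGraph P α (insert (w : Pt) S)).unreachableSet v :=
    fun ha' => (hH.eq_or_eq_of_adj ha.2.1 huZ ha').elim huw haw
  have hab : a ≠ b := by rintro rfl; exact ha' hb.1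
  rcases hH.eq_or_eq_of_adj (shrunkGraph_adj_of_dist_le hα hab h) ha' hb.1 with rfl | rfl
  · exact haw rfl
  · exact hw hb.1

theorem card_le_of_forall_mem_unreachableSet_self (hα₀ : 0 < α) (hα₁ : α ≤ 1)
    (hG : (shrunkGraph P α S).Preconnected) {s : Finset {x : Pt // x ∈ P}} {c : Pt}
    (hs : ∀ w ∈ s, (w : Pt) ∉ S ∧ dist (w : Pt) c ≤ 4 ∧
      w ∈ (shrunkGraph P α (insert (w : Pt) S)).unreachableSet v) :
    (s.card : ℝ) ≤ (4 / α + 1) ^ 2 :=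
  card_le_of_separated_of_dist_le_four s Subtype.val hα₀ (fun w hw => (hs w hw).2.1)
    fun i hi j hj hij => two_mul_lt_dist_of_mem_unreachableSet_self hα₁ hG (hs i hi).1
      (hs j hj).1 hij (hs i hi).2.2 (hs j hj).2.2

theorem card_le_of_forall_isPendant (hα₀ : 0 < α) (hα₁ : α ≤ 1)
    (hG : (shrunkGraph P α S).Preconnected) {s : Finset {x : Pt // x ∈ P}} {c : Pt}
    (f : {x : Pt // x ∈ P} → {x : Pt // x ∈ P})
    (hs : ∀ w ∈ s, dist (w : Pt) c ≤ 2 ∧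
      w ∉ (shrunkGraph P α (insert (w : Pt) S)).unreachableSet v ∧ IsPendant α S v w (f w)) :
    (s.card : ℝ) ≤ (4 / α + 1) ^ 2 := by
  refine card_le_of_separated_of_dist_le_four s (fun w => (f w : Pt)) (c := c) hα₀
    (fun w hw => ?_)
    fun i hi j hj hij => (hs i hi).2.2.two_mul_lt_dist hα₁ hG hij (hs i hi).2.1 (hs j hj).2.1
      (hs j hj).2.2
  have hwf := dist_le_two_of_shrunkGraph_adj hα₁ (hs w hw).2.2.2.1
  linarith [dist_triangle_left (f w : Pt) c w, (hs w hw).1]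

end ShrunkGraph

/-- For k-Shrinking to Connectivity: any maximum-cardinality solution contains all but
at most 9(4/α+1)² + 9 of the points of the closed neighborhood of any vertex v. -/
theorem stmt_17 (P : Finset Pt) (α : ℝ) (hα₀ : 0 < α) (hα₁ : α ≤ 1)
    (v : Pt) (hv : v ∈ P)
    (S : Finset Pt) (hSP : S ⊆ P)
    (hsol : (closedDiskGraph P (fun x => if x ∈ S then α else 1)).Connected)
    (hmax : ∀ S' ⊆ P,
      (closedDiskGraph P (fun x => if x ∈ S' then α else 1)).Connected →
      S'.card ≤ S.card) :
    ((({u : Pt | u ∈ P ∧ dist u v ≤ 2} \ ↑S).ncard : ℝ)) ≤ 9 * (4 / α + 1) ^ 2 + 9 := by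
  have hG : (shrunkGraph P α S).Preconnected := hsol.preconnected
  set Z : {x // x ∈ P} → Set {x // x ∈ P} :=
    fun w => (shrunkGraph P α (insert (w : Pt) S)).unreachableSet ⟨v, hv⟩
  have hZ : ∀ w : {x // x ∈ P}, (w : Pt) ∉ S → (Z w).Nonempty := fun w hw =>
    SimpleGraph.unreachableSet_nonempty fun h => by
      have := hmax _ (Finset.insert_subset w.2 hSP) h
      rw [Finset.card_insert_of_notMem hw] at this
      omega
  choose! b hb using fun (w : {x // x ∈ P}) (hw : (w : Pt) ∉ S ∧ w ∉ Z w) =>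
    exists_isPendant hα₁ hG hw.2 (hZ w hw.1)
  set T := Finset.univ.filter fun w : {x // x ∈ P} => dist (w : Pt) v ≤ 2 ∧ (w : Pt) ∉ S
  have hcount : {u : Pt | u ∈ P ∧ dist u v ≤ 2} \ ↑S = Subtype.val '' (T : Set {x // x ∈ P}) := by
    ext u
    simp [T, and_comm, and_assoc]
  rw [hcount, Set.ncard_image_of_injective _ Subtype.val_injective, Set.ncard_coe_finset,
    ← Finset.card_filter_add_card_filter_not (fun w => w ∈ Z w)]
  have hself := card_le_of_forall_mem_unreachableSet_self hα₀ hα₁ hG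
    (s := T.filter fun w => w ∈ Z w) (c := v) fun w hw => by
      simp only [T, Finset.mem_filter, Finset.mem_univ, true_and] at hw
      exact ⟨hw.1.2, by linarith [hw.1.1], hw.2⟩
  have hpend := card_le_of_forall_isPendant hα₀ hα₁ hG (s := T.filter fun w => w ∉ Z w) b
    fun w hw => by
      simp only [T, Finset.mem_filter, Finset.mem_univ, true_and] at hw
      exact ⟨hw.1.1, hw.2, hb w ⟨hw.1.2, hw.2⟩⟩
  push_cast
  linarith [sq_nonneg (4 / α + 1)]
end

section
/- Let P be a finite set of points in ℝ², let 0 ≤ α ≤ 1 and k ∈ ℕ, and let H = G(P,𝟏) be the unit disk graph. Let C ⊆ P be the vertex set of a connected component of H in which every vertex has degree exactly 2 in H (an isolated cycle). Suppose S ⊆ P with |S| ≤ k and r : P → ℝ with r(p) = 1 for p ∉ S and α ≤ r(p) ≤ 1 for p ∈ S are such that the open-disk intersection graph G(P,r) is acyclic, and suppose |S ∩ C| ≥ 3. Then there exist S' ⊆ P and r' : P → ℝ with r'(p) = 1 for p ∉ S' and α ≤ r'(p) ≤ 1 for p ∈ S', such that G(P,r') is acyclic, |S' ∩ C| ≤ 2,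 |S'| ≤ |S| (so |S'| ≤ k), and Σ_{p∈P}(1 − r'(p)) ≤ Σ_{p∈P}(1 − r(p)). -/
open scoped Classical

/-! The unit disk graph restricted to `C` is connected and 2-regular, so it is not a tree, and
some unit edge `pq` of `C` is therefore missing from the acyclic graph `G(P,r)`. Reset every
disk of `C` other than `p` and `q` to radius 1. A cycle of the new graph inside `C` can only use
unit edges, and each vertex of `C` has just two of them, so the cycle would be all of `C` and would
contain the edge `pq`, whose radii are unchanged. Outside `C` the radii are those of `r`, so a
cycle there is a cycle of `G(P,r)`. -/

namespace SimpleGraph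

variable {V : Type*} {G H : SimpleGraph V}

theorem Walk.IsCycle.toSubgraph_adj_of_ncard_neighborSet_eq_two (hHG : H ≤ G) {a x y : V}
    {c : H.Walk a a} (hc : c.IsCycle) (hx : x ∈ c.support) (hdeg : (G.neighborSet x).ncard = 2)
    (hxy : G.Adj x y) : c.toSubgraph.Adj x y := by
  have hsub : c.toSubgraph.neighborSet x ⊆ G.neighborSet x := fun _ hy ↦
    hHG (c.toSubgraph.adj_sub hy)
  have heq := Set.eq_of_subset_of_ncard_le hsub
    (by rw [hdeg, hc.ncard_neighborSet_toSubgraph_eq_two hx]) (Set.finite_of_ncard_pos (by omega))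
  change y ∈ c.toSubgraph.neighborSet x
  exact heq ▸ hxy

theorem Walk.IsCycle.toSubgraph_adj_of_reachable (hHG : H ≤ G) {a v : V} {c : H.Walk a a}
    (hc : c.IsCycle) (hdeg : ∀ u, G.Reachable u v → (G.neighborSet u).ncard = 2)
    (ha : G.Reachable a v) {x y : V} (hx : G.Reachable x v) (hxy : G.Adj x y) :
    c.toSubgraph.Adj x y := by
  suffices hsupp :
      ∀ {u x : V} (w : G.Walk u x), u ∈ c.support → G.Reachable u v → x ∈ c.support from
    hc.toSubgraph_adj_of_ncard_neighborSet_eq_two hHG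
      (hsupp (ha.trans hx.symm).some c.start_mem_support ha) (hdeg x hx) hxy
  intro u x w
  induction w with
  | nil => exact fun hu _ ↦ hu
  | cons huu' _ ih =>
    intro hu hreach
    have hadj := hc.toSubgraph_adj_of_ncard_neighborSet_eq_two hHG hu (hdeg _ hreach) huu'
    exact ih (c.mem_verts_toSubgraph.mp hadj.snd_mem) (huu'.symm.reachable.trans hreach)

theorem isAcyclic_of_le_of_not_adj {G' : SimpleGraph V} (hHG : H ≤ G) (hG' : G'.IsAcyclic)
    {v : V}
    (hdeg : ∀ u, G.Reachable u v → (G.neighborSet u).ncard = 2)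
    (hout : ∀ x y, ¬G.Reachable x v → H.Adj x y → G'.Adj x y)
    {p q : V} (hp : G.Reachable p v) (hpq : G.Adj p q) (hH : ¬H.Adj p q) : H.IsAcyclic := by
  intro a c hc
  by_cases ha : G.Reachable a v
  · exact hH ((hc.toSubgraph_adj_of_reachable hHG hdeg ha hp hpq).adj_sub)
  · have hedges : ∀ e ∈ c.edges, e ∈ G'.edgeSet := by
      rintro ⟨x, y⟩ he
      have hax : G.Reachable a x :=
        ((c.takeUntil x (c.fst_mem_support_of_mem_edges he)).reachable).mono hHG
      exact hout x y (fun hx ↦ ha (hax.trans hx)) (c.adj_of_mem_edges he)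
    exact hG' (c.transfer G' hedges) (hc.transfer hedges)

theorem exists_adj_not_adj_of_isAcyclic [Finite V] {G' : SimpleGraph V} (hG' : G'.IsAcyclic)
    {v : V} (hdeg : ∀ u, G.Reachable u v → (G.neighborSet u).ncard = 2) :
    ∃ p q, G.Reachable p v ∧ G.Adj p q ∧ ¬G'.Adj p q := by
  by_contra! hall
  set K := G.connectedComponentMk v
  have hK : ∀ u : K, G.Reachable u v := fun u ↦ ConnectedComponent.exact u.2
  have hT : K.toSimpleGraph.IsTree :=
    ⟨K.connected_toSimpleGraph, hG'.comap ⟨Subtype.val, fun {x y} hxy ↦ hall x y (hK x) hxy⟩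
      Subtype.val_injective⟩
  have hdegK : ∀ u : K, (K.toSimpleGraph.neighborSet u).ncard = 2 := by
    intro u
    rw [← hdeg u (hK u), ← Set.ncard_image_of_injective _ Subtype.val_injective]
    congr
    ext w
    refine ⟨fun ⟨w, hw, hval⟩ ↦ hval ▸ hw, fun huw ↦ ⟨⟨w, ?_⟩, huw, rfl⟩⟩
    exact ConnectedComponent.sound ((G.adj_symm huw).reachable.trans (hK u))
  have := Fintype.ofFinite K
  have : Nontrivial K := by
    obtain ⟨a, b, hab, -⟩ := Set.ncard_eq_two.mp (hdegK ⟨v, rfl⟩)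
    exact nontrivial_of_ne a b hab
  obtain ⟨u, hu⟩ := hT.exists_vert_degree_one_of_nontrivial
  rw [← card_neighborSet_eq_degree, ← Nat.card_eq_fintype_card, Nat.card_coe_set_eq,
    hdegK] at hu
  exact absurd hu (by norm_num)

end SimpleGraph

namespace diskGraph

variable {P : Finset Pt}

theorem mono {r r' : Pt → ℝ} (h : ∀ p ∈ P, r p ≤ r' p) : diskGraph P r ≤ diskGraph P r' :=
  fun p q hpq ↦ ⟨hpq.1, by linarith [h p p.2, h q q.2, hpq.2]⟩

theorem adj_congr {r r' : Pt → ℝ} {p q : {x : Pt // x ∈ P}} (hp : r' p = r p) (hq : r' q = r q) :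
    (diskGraph P r').Adj p q ↔ (diskGraph P r).Adj p q := by
  change _ ∧ _ ↔ _ ∧ _
  rw [hp, hq]

theorem ncard_neighborSet (r : Pt → ℝ) (p : {x : Pt // x ∈ P}) :
    ((diskGraph P r).neighborSet p).ncard =
      {q : Pt | q ∈ P ∧ q ≠ p ∧ dist (p : Pt) q < r p + r q}.ncard := by
  rw [← Set.ncard_image_of_injective _ Subtype.val_injective]
  congr
  ext q
  refine ⟨fun ⟨q, hq, hval⟩ ↦ hval ▸ ⟨q.2, fun h ↦ hq.1 (Subtype.ext h).symm, hq.2⟩,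
    fun ⟨hqP, hqp, hd⟩ ↦ ⟨⟨q, hqP⟩, ⟨fun h ↦ hqp (congrArg Subtype.val h).symm, hd⟩, rfl⟩⟩

theorem isAcyclic_piecewise_one {C : Finset Pt} {r : Pt → ℝ} (hr : ∀ x ∈ P, r x ≤ 1)
    (hacyc : (diskGraph P r).IsAcyclic) {v : {x : Pt // x ∈ P}}
    (hC : ∀ q : {x : Pt // x ∈ P}, ↑q ∈ C ↔ (diskGraph P fun _ ↦ 1).Reachable q v)
    (hdeg : ∀ u, (diskGraph P fun _ ↦ 1).Reachable u v →
      ((diskGraph P fun _ ↦ 1).neighborSet u).ncard = 2)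
    {p q : {x : Pt // x ∈ P}} (hpv : (diskGraph P fun _ ↦ 1).Reachable p v)
    (hpq : (diskGraph P fun _ ↦ 1).Adj p q) (hbroken : ¬(diskGraph P r).Adj p q) :
    (diskGraph P ((C \ {(p : Pt), (q : Pt)}).piecewise 1 r)).IsAcyclic := by
  set T := C \ {(p : Pt), (q : Pt)}
  have hle : ∀ x ∈ P, T.piecewise 1 r x ≤ 1 := fun x hx ↦
    T.piecewise_cases 1 r (· ≤ 1) le_rfl (hr x hx)
  have hnotT : ∀ z, ¬(diskGraph P fun _ ↦ 1).Reachable z v → T.piecewise 1 r z = r z :=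
    fun z hz ↦ T.piecewise_eq_of_notMem _ _ fun hzT ↦ hz ((hC z).mp (Finset.mem_sdiff.mp hzT).1)
  refine SimpleGraph.isAcyclic_of_le_of_not_adj (mono hle) hacyc hdeg
    (fun x y hx hxy ↦ ?_) hpv hpq ?_
  · have hy : ¬(diskGraph P fun _ ↦ 1).Reachable y v := fun hy ↦
      hx ((mono hle hxy).reachable.trans hy)
    exact (adj_congr (hnotT x hx) (hnotT y hy)).mp hxy
  · rwa [adj_congr (T.piecewise_eq_of_notMem _ _ (by simp [T]))
      (T.piecewise_eq_of_notMem _ _ (by simp [T]))]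

end diskGraph

theorem stmt_19_general (P : Finset Pt) (α : ℝ)
    (C : Finset Pt)
    (hcomp : ∃ v : {x : Pt // x ∈ P}, ↑v ∈ C ∧
      ∀ q : {x : Pt // x ∈ P},
        (↑q ∈ C ↔ (diskGraph P (fun _ => 1)).Reachable q v))
    (hdeg2 : ∀ p ∈ C, ({q : Pt | q ∈ P ∧ q ≠ p ∧ dist p q < 2}).ncard = 2)
    (S : Finset Pt) (hSP : S ⊆ P)
    (r : Pt → ℝ) (hr1 : ∀ p ∈ P, p ∉ S → r p = 1) (hr2 : ∀ p ∈ S, α ≤ r p ∧ r p ≤ 1)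
    (hacyc : (diskGraph P r).IsAcyclic) :
    ∃ S' ⊆ P, ∃ r' : Pt → ℝ,
      (∀ p ∈ P, p ∉ S' → r' p = 1) ∧ (∀ p ∈ S', α ≤ r' p ∧ r' p ≤ 1) ∧
      (diskGraph P r').IsAcyclic ∧
      (S' ∩ C).card ≤ 2 ∧ S'.card ≤ S.card ∧
      ∑ p ∈ P, (1 - r' p) ≤ ∑ p ∈ P, (1 - r p) := by
  obtain ⟨v, -, hC⟩ := hcomp
  have hrle : ∀ x ∈ P, r x ≤ 1 := fun x hx ↦ by
    by_cases hxS : x ∈ S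
    exacts [(hr2 x hxS).2, (hr1 x hx hxS).le]
  have hdeg : ∀ u, (diskGraph P fun _ ↦ 1).Reachable u v →
      ((diskGraph P fun _ ↦ 1).neighborSet u).ncard = 2 := fun u hu ↦ by
    rw [diskGraph.ncard_neighborSet, one_add_one_eq_two]
    exact hdeg2 u ((hC u).mpr hu)
  obtain ⟨p, q, hpv, hpq, hbroken⟩ := SimpleGraph.exists_adj_not_adj_of_isAcyclic hacyc hdeg
  set T := C \ {(p : Pt), (q : Pt)}
  refine ⟨S \ T, Finset.sdiff_subset.trans hSP, T.piecewise 1 r, fun x hx hxS' ↦ ?_,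
    fun x hx ↦ ?_, diskGraph.isAcyclic_piecewise_one hrle hacyc hC hdeg hpv hpq hbroken, ?_,
    Finset.card_le_card Finset.sdiff_subset, Finset.sum_le_sum fun x hx ↦ ?_⟩
  · by_cases hxT : x ∈ T
    · exact T.piecewise_eq_of_mem _ _ hxT
    · rw [T.piecewise_eq_of_notMem _ _ hxT]
      exact hr1 x hx fun hxS ↦ hxS' (Finset.mem_sdiff.mpr ⟨hxS, hxT⟩)
  · obtain ⟨hxS, hxT⟩ := Finset.mem_sdiff.mp hx
    rw [T.piecewise_eq_of_notMem _ _ hxT]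
    exact hr2 x hxS
  · have hsub : (S \ T) ∩ C ⊆ {(p : Pt), (q : Pt)} := fun x hx ↦ by
      simp only [Finset.mem_inter, Finset.mem_sdiff, T] at hx
      tauto
    exact (Finset.card_le_card hsub).trans Finset.card_le_two
  · exact sub_le_sub_left (T.piecewise_cases 1 r (r x ≤ ·) (hrle x hx) le_rfl) 1

/-- If a solution of (Min) k-Shrinking to Acyclicity shrinks at least 3 disks of an
isolated cycle C (a connected component of G(P,𝟏) all of whose vertices have degree
exactly 2), then there is another solution shrinking at most 2 disks of C, of no
greater size and no greater cost. -/
theorem stmt_19 (P : Finset Pt) (α : ℝ) (hα₀ : 0 ≤ α) (hα₁ : α ≤ 1) (k : ℕ)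
    (C : Finset Pt) (hCP : C ⊆ P)
    (hcomp : ∃ v : {x : Pt // x ∈ P}, ↑v ∈ C ∧
      ∀ q : {x : Pt // x ∈ P},
        (↑q ∈ C ↔ (diskGraph P (fun _ => 1)).Reachable q v))
    (hdeg2 : ∀ p ∈ C, ({q : Pt | q ∈ P ∧ q ≠ p ∧ dist p q < 2}).ncard = 2)
    (S : Finset Pt) (hSP : S ⊆ P) (hcard : S.card ≤ k)
    (r : Pt → ℝ) (hr1 : ∀ p ∈ P, p ∉ S → r p = 1) (hr2 : ∀ p ∈ S, α ≤ r p ∧ r p ≤ 1)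
    (hacyc : (diskGraph P r).IsAcyclic)
    (hSC : 3 ≤ (S ∩ C).card) :
    ∃ S' ⊆ P, ∃ r' : Pt → ℝ,
      (∀ p ∈ P, p ∉ S' → r' p = 1) ∧ (∀ p ∈ S', α ≤ r' p ∧ r' p ≤ 1) ∧
      (diskGraph P r').IsAcyclic ∧
      (S' ∩ C).card ≤ 2 ∧ S'.card ≤ S.card ∧
      ∑ p ∈ P, (1 - r' p) ≤ ∑ p ∈ P, (1 - r p) :=
  stmt_19_general P α C hcomp hdeg2 S hSP r hr1 hr2 hacyc
end
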